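/- arXiv:1003.3627 — 4 statements merged into one kernel-verified Lean document; each statement's English description precedes it below -/
import Mathlib

section
/- Suppose φ ↦ ν_φ assigns to each φ ∈ C a finite signed measure ν_φ on [−r,0] such that (i) ‖ν_φ‖_{TV} ≤ M_{Vg} for all φ ∈ C, and (ii) ‖ν_φ − ν_ψ‖_{TV} ≤ L_{Vg} ‖φ − ψ‖_C for all φ, ψ ∈ C. Let b : ℝ → ℝ be Lipschitz with constant L_b and bounded with |b(s)| ≤ M_b for all s. Then the map F_c : C → L²(Ω), F_c(φ)(x) := ∫_{[−r,0]} ( ∫_Ω b(φ(θ)(y)) f(x−y) dy ) dν_φ(θ), is globally Lipschitz: ‖F_c(φ) − F_c(ψ)‖_{L²(Ω)} ≤ M_f |Ω| ( L_b M_{Vg} + M_b |Ω|^{1/2} L_{Vg} ) ‖φ − ψ‖_C for all φ, ψ ∈ C. -/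
open MeasureTheory Set Filter Topology

/-- Integral of a real function against a (finite) signed measure, defined via the
Jordan decomposition: `∫ g dν := ∫ g dν⁺ − ∫ g dν⁻`. -/
noncomputable def sintegral {α : Type*} [MeasurableSpace α]
    (ν : MeasureTheory.SignedMeasure α) (g : α → ℝ) : ℝ :=
  ∫ a, g a ∂ν.toJordanDecomposition.posPart - ∫ a, g a ∂ν.toJordanDecomposition.negPart

/-- Total variation norm `‖ν‖_{TV}` of a signed measure. -/
noncomputable def tvNorm {α : Type*} [MeasurableSpace α]
    (ν : MeasureTheory.SignedMeasure α) : ℝ :=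
  (ν.totalVariation Set.univ).toReal

/-!
For fixed `x`, the inner integral `G(u) = ∫_Ω b(u y) f(x - y) dy` is, as a function of
`u ∈ L²(Ω)`, bounded by `M_b M_f |Ω|` and Lipschitz with constant `L_b M_f |Ω|^{1/2}`, since
Cauchy–Schwarz bounds the `L¹(Ω)` distance of `u, v` by `|Ω|^{1/2} ‖u - v‖`. Splitting
`∫ G∘φ dν_φ - ∫ G∘ψ dν_ψ = ∫ (G∘φ - G∘ψ) dν_φ + ∫ G∘ψ d(ν_φ - ν_ψ)` then bounds `|F_c(φ)(x) - F_c(ψ)(x)|`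
by `(L_b M_f |Ω|^{1/2} M_Vg + M_b M_f |Ω| L_Vg) ‖φ - ψ‖`, and a
function bounded by `C` on `Ω` has `L²(Ω)` norm at most `|Ω|^{1/2} C`.
-/

section SignedIntegral

variable {α : Type*} [MeasurableSpace α]

lemma tvNorm_eq_posPart_add_negPart (ν : SignedMeasure α) :
    tvNorm ν = ν.toJordanDecomposition.posPart.real univ
      + ν.toJordanDecomposition.negPart.real univ := by
  simp [tvNorm, SignedMeasure.totalVariation, Measure.real, Measure.add_apply,
    ENNReal.toReal_add (measure_ne_top _ _) (measure_ne_top _ _)]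

lemma abs_sintegral_le_mul_tvNorm (ν : SignedMeasure α) {g : α → ℝ} {K : ℝ}
    (hK : ∀ a, |g a| ≤ K) : |sintegral ν g| ≤ K * tvNorm ν := by
  have hpos := norm_integral_le_of_norm_le_const (μ := ν.toJordanDecomposition.posPart)
    (f := g) (ae_of_all _ hK)
  have hneg := norm_integral_le_of_norm_le_const (μ := ν.toJordanDecomposition.negPart)
    (f := g) (ae_of_all _ hK)
  rw [Real.norm_eq_abs] at hpos hneg
  rw [tvNorm_eq_posPart_add_negPart, sintegral]
  linarith [abs_sub (∫ a, g a ∂ν.toJordanDecomposition.posPart)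
    (∫ a, g a ∂ν.toJordanDecomposition.negPart)]

lemma sintegral_eq_integral_sub_integral {ν : SignedMeasure α} {μ₁ μ₂ : Measure α}
    [IsFiniteMeasure μ₁] [IsFiniteMeasure μ₂]
    (hν : ν = μ₁.toSignedMeasure - μ₂.toSignedMeasure) {g : α → ℝ} (hg : Measurable g)
    {K : ℝ} (hK : ∀ a, |g a| ≤ K) :
    sintegral ν g = ∫ a, g a ∂μ₁ - ∫ a, g a ∂μ₂ := by
  set p := ν.toJordanDecomposition.posPart
  set n := ν.toJordanDecomposition.negPart
  have hsum : p + μ₂ = μ₁ + n := by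
    have hjordan : p.toSignedMeasure - n.toSignedMeasure
        = μ₁.toSignedMeasure - μ₂.toSignedMeasure :=
      ν.toSignedMeasure_toJordanDecomposition.trans hν
    rw [sub_eq_sub_iff_add_eq_add] at hjordan
    rwa [← Measure.toSignedMeasure_eq_toSignedMeasure_iff, Measure.toSignedMeasure_add,
      Measure.toSignedMeasure_add]
  have hint : ∀ (μ : Measure α) [IsFiniteMeasure μ], Integrable g μ :=
    fun μ _ => Integrable.of_bound hg.aestronglyMeasurable K (ae_of_all _ hK)
  have := congrArg (fun μ => ∫ a, g a ∂μ) hsum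
  simp only [integral_add_measure (hint _) (hint _)] at this
  rw [sintegral]
  linarith

lemma sintegral_sub_measure (ν₁ ν₂ : SignedMeasure α) {g : α → ℝ} (hg : Measurable g)
    {K : ℝ} (hK : ∀ a, |g a| ≤ K) :
    sintegral (ν₁ - ν₂) g = sintegral ν₁ g - sintegral ν₂ g := by
  have hdecomp : ν₁ - ν₂ = (ν₁.toJordanDecomposition.posPart
      + ν₂.toJordanDecomposition.negPart).toSignedMeasure
      - (ν₁.toJordanDecomposition.negPart + ν₂.toJordanDecomposition.posPart).toSignedMeasure := by
    conv_lhs => rw [← ν₁.toSignedMeasure_toJordanDecomposition,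
      ← ν₂.toSignedMeasure_toJordanDecomposition]
    simp only [JordanDecomposition.toSignedMeasure, Measure.toSignedMeasure_add]
    abel
  have hint : ∀ (μ : Measure α) [IsFiniteMeasure μ], Integrable g μ :=
    fun μ _ => Integrable.of_bound hg.aestronglyMeasurable K (ae_of_all _ hK)
  rw [sintegral_eq_integral_sub_integral hdecomp hg hK, integral_add_measure (hint _) (hint _),
    integral_add_measure (hint _) (hint _), sintegral, sintegral]
  ring

lemma sintegral_sub (ν : SignedMeasure α) {g₁ g₂ : α → ℝ} (hg₁ : Measurable g₁)
    (hg₂ : Measurable g₂) {K₁ K₂ : ℝ} (hK₁ : ∀ a, |g₁ a| ≤ K₁) (hK₂ : ∀ a, |g₂ a| ≤ K₂) :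
    sintegral ν (fun a => g₁ a - g₂ a) = sintegral ν g₁ - sintegral ν g₂ := by
  simp only [sintegral]
  have hint : ∀ (μ : Measure α) [IsFiniteMeasure μ], Integrable g₁ μ ∧ Integrable g₂ μ :=
    fun μ _ => ⟨.of_bound hg₁.aestronglyMeasurable K₁ (ae_of_all _ hK₁),
      .of_bound hg₂.aestronglyMeasurable K₂ (ae_of_all _ hK₂)⟩
  rw [integral_sub (hint _).1 (hint _).2, integral_sub (hint _).1 (hint _).2]
  ring

end SignedIntegral

section SuperpositionIntegral

variable {α : Type*} [MeasurableSpace α] {μ : Measure α} [IsFiniteMeasure μ]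

lemma integral_abs_le_mul_norm_Lp_two (w : Lp ℝ 2 μ) :
    ∫ a, |w a| ∂μ ≤ μ.real univ ^ (1 / 2 : ℝ) * ‖w‖ := by
  have hw : MemLp (w : α → ℝ) 2 μ := Lp.memLp w
  have hholder : eLpNorm (w : α → ℝ) 1 μ ≤ eLpNorm (w : α → ℝ) 2 μ * μ univ ^ (1 / 2 : ℝ) := by
    convert eLpNorm_le_eLpNorm_mul_rpow_measure_univ (p := 1) (q := 2) (by norm_num)
      hw.aestronglyMeasurable using 2
    norm_num
  have hfin : eLpNorm (w : α → ℝ) 2 μ * μ univ ^ (1 / 2 : ℝ) ≠ ⊤ :=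
    ENNReal.mul_ne_top (Lp.eLpNorm_ne_top w) (by finiteness)
  calc ∫ a, |w a| ∂μ = (eLpNorm (w : α → ℝ) 1 μ).toReal := by
        simp only [eLpNorm_one_eq_lintegral_enorm, ← Real.norm_eq_abs,
          ← integral_norm_eq_lintegral_enorm hw.aestronglyMeasurable]
    _ ≤ (eLpNorm (w : α → ℝ) 2 μ * μ univ ^ (1 / 2 : ℝ)).toReal :=
        ENNReal.toReal_mono hfin hholder
    _ = μ.real univ ^ (1 / 2 : ℝ) * ‖w‖ := by
        rw [ENNReal.toReal_mul, Lp.norm_def, ← ENNReal.toReal_rpow, mul_comm, Measure.real]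

lemma eLpNorm_two_le_of_abs_le {g : α → ℝ} {C : ℝ} (hg : ∀ a, |g a| ≤ C) :
    eLpNorm g 2 μ ≤ ENNReal.ofReal (μ.real univ ^ (1 / 2 : ℝ) * C) := by
  refine (eLpNorm_le_of_ae_bound (ae_of_all _ hg)).trans_eq ?_
  rw [ENNReal.ofReal_mul (by positivity), ← ENNReal.ofReal_rpow_of_nonneg measureReal_nonneg
    (by norm_num), ofReal_measureReal (measure_ne_top _ _)]
  norm_num

variable {b : ℝ → ℝ} {F : α → ℝ} {Mb Mf : ℝ}

lemma abs_integral_comp_mul_le (hb : ∀ s, |b s| ≤ Mb) (hF : ∀ a, |F a| ≤ Mf) (u : α → ℝ) :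
    |∫ a, b (u a) * F a ∂μ| ≤ Mb * Mf * μ.real univ :=
  norm_integral_le_of_norm_le_const (f := fun a => b (u a) * F a) <| ae_of_all _ fun a => by
    rw [Real.norm_eq_abs, abs_mul]
    exact mul_le_mul (hb _) (hF a) (abs_nonneg _) ((abs_nonneg _).trans (hb 0))

lemma abs_integral_comp_mul_sub_le {Lb : ℝ} (hLb : 0 ≤ Lb)
    (hblip : ∀ s t, |b s - b t| ≤ Lb * |s - t|) (hb : ∀ s, |b s| ≤ Mb)
    (hFm : AEStronglyMeasurable F μ) (hMf : 0 ≤ Mf) (hF : ∀ a, |F a| ≤ Mf) (u v : Lp ℝ 2 μ) :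
    |∫ a, b (u a) * F a ∂μ - ∫ a, b (v a) * F a ∂μ|
      ≤ Lb * Mf * μ.real univ ^ (1 / 2 : ℝ) * ‖u - v‖ := by
  have hbcont : Continuous b := (LipschitzWith.of_dist_le' hblip).continuous
  have hint : ∀ w : Lp ℝ 2 μ, Integrable (fun a => b (w a) * F a) μ := fun w =>
    Integrable.of_bound ((hbcont.comp_aestronglyMeasurable (Lp.aestronglyMeasurable w)).mul hFm)
      (Mb * Mf) <| ae_of_all _ fun a => by
        rw [Real.norm_eq_abs, abs_mul]
        exact mul_le_mul (hb _) (hF a) (abs_nonneg _) ((abs_nonneg _).trans (hb 0))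
  have hpointwise : ∀ᵐ a ∂μ,
      ‖b (u a) * F a - b (v a) * F a‖ ≤ Lb * Mf * |(u - v : Lp ℝ 2 μ) a| := by
    filter_upwards [Lp.coeFn_sub u v] with a hsub
    rw [hsub, Pi.sub_apply, Real.norm_eq_abs, ← sub_mul, abs_mul, mul_right_comm]
    exact mul_le_mul (hblip _ _) (hF a) (abs_nonneg _) (mul_nonneg hLb (abs_nonneg _))
  rw [← integral_sub (hint u) (hint v)]
  calc |∫ a, (b (u a) * F a - b (v a) * F a) ∂μ|
      ≤ ∫ a, Lb * Mf * |(u - v : Lp ℝ 2 μ) a| ∂μ :=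
        norm_integral_le_of_norm_le
          (((Lp.memLp (u - v)).integrable one_le_two).abs.const_mul _) hpointwise
    _ = Lb * Mf * ∫ a, |(u - v : Lp ℝ 2 μ) a| ∂μ := integral_const_mul _ _
    _ ≤ Lb * Mf * (μ.real univ ^ (1 / 2 : ℝ) * ‖u - v‖) :=
        mul_le_mul_of_nonneg_left (integral_abs_le_mul_norm_Lp_two _) (mul_nonneg hLb hMf)
    _ = Lb * Mf * μ.real univ ^ (1 / 2 : ℝ) * ‖u - v‖ := by ring

end SuperpositionIntegral

lemma abs_sintegral_comp_sub_le {X E : Type*} [TopologicalSpace X] [CompactSpace X]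
    [MeasurableSpace X] [OpensMeasurableSpace X] [SeminormedAddCommGroup E]
    {G : E → ℝ} {M L : ℝ} (hG : ∀ u, |G u| ≤ M) (hL : 0 ≤ L)
    (hGlip : ∀ u v, |G u - G v| ≤ L * ‖u - v‖) (ν₁ ν₂ : SignedMeasure X) (φ ψ : C(X, E)) :
    |sintegral ν₁ (fun θ => G (φ θ)) - sintegral ν₂ (fun θ => G (ψ θ))|
      ≤ L * ‖φ - ψ‖ * tvNorm ν₁ + M * tvNorm (ν₁ - ν₂) := by
  have hGcont : Continuous G :=
    (LipschitzWith.of_dist_le' fun u v => by simpa [Real.dist_eq, dist_eq_norm] using hGlip u v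
      ).continuous
  have hφ : Measurable fun θ => G (φ θ) := (hGcont.comp φ.continuous).measurable
  have hψ : Measurable fun θ => G (ψ θ) := (hGcont.comp ψ.continuous).measurable
  have hdiff : ∀ θ, |G (φ θ) - G (ψ θ)| ≤ L * ‖φ - ψ‖ := fun θ =>
    (hGlip _ _).trans (mul_le_mul_of_nonneg_left ((φ - ψ).norm_coe_le_norm θ) hL)
  have hsplit : sintegral ν₁ (fun θ => G (φ θ)) - sintegral ν₂ (fun θ => G (ψ θ))
      = sintegral ν₁ (fun θ => G (φ θ) - G (ψ θ))
        + sintegral (ν₁ - ν₂) (fun θ => G (ψ θ)) := by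
    rw [sintegral_sub ν₁ hφ hψ (fun θ => hG _) (fun θ => hG _),
      sintegral_sub_measure ν₁ ν₂ hψ (fun θ => hG _)]
    ring
  rw [hsplit]
  exact (abs_add_le _ _).trans (add_le_add (abs_sintegral_le_mul_tvNorm ν₁ hdiff)
    (abs_sintegral_le_mul_tvNorm _ fun θ => hG _))

theorem stmt4_general
    {n₀ : ℕ} (Ω : Set (EuclideanSpace ℝ (Fin n₀)))
    (hΩbdd : Bornology.IsBounded Ω)
    (r : ℝ)
    (f : EuclideanSpace ℝ (Fin n₀) → ℝ) (hf : Measurable f)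
    (Mf : ℝ) (hMf : ∀ z, |f z| ≤ Mf)
    (ν : C(Set.Icc (-r) (0:ℝ), Lp ℝ 2 (volume.restrict Ω)) →
      MeasureTheory.SignedMeasure (Set.Icc (-r) (0:ℝ)))
    (MVg : ℝ) (hMVg : ∀ φ, tvNorm (ν φ) ≤ MVg)
    (LVg : ℝ) (hLVg : ∀ φ ψ, tvNorm (ν φ - ν ψ) ≤ LVg * ‖φ - ψ‖)
    (b : ℝ → ℝ) (Lb : ℝ)
    (hblip : ∀ s t : ℝ, |b s - b t| ≤ Lb * |s - t|)
    (Mb : ℝ) (hbbdd : ∀ s : ℝ, |b s| ≤ Mb)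
    (φ ψ : C(Set.Icc (-r) (0:ℝ), Lp ℝ 2 (volume.restrict Ω))) :
    eLpNorm (fun x =>
        sintegral (ν φ) (fun θ => ∫ y in Ω, b (φ θ y) * f (x - y)) -
        sintegral (ν ψ) (fun θ => ∫ y in Ω, b (ψ θ y) * f (x - y)))
        2 (volume.restrict Ω)
      ≤ ENNReal.ofReal (Mf * (volume Ω).toReal *
          (Lb * MVg + Mb * (volume Ω).toReal ^ ((1:ℝ)/2) * LVg) * ‖φ - ψ‖) := by
  have : IsFiniteMeasure (volume.restrict Ω) :=
    isFiniteMeasure_restrict.2 hΩbdd.measure_lt_top.ne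
  set t := (volume Ω).toReal with ht
  have ht0 : 0 ≤ t := ENNReal.toReal_nonneg
  have htμ : (volume.restrict Ω).real univ = t := by simp [Measure.real, ht]
  have hLb : 0 ≤ Lb := (abs_nonneg _).trans (by simpa using hblip 1 0)
  have hMf0 : 0 ≤ Mf := (abs_nonneg _).trans (hMf 0)
  have hpointwise : ∀ x, |sintegral (ν φ) (fun θ => ∫ y in Ω, b (φ θ y) * f (x - y)) -
      sintegral (ν ψ) (fun θ => ∫ y in Ω, b (ψ θ y) * f (x - y))|
        ≤ Lb * Mf * t ^ (1 / 2 : ℝ) * ‖φ - ψ‖ * MVg + Mb * Mf * t * (LVg * ‖φ - ψ‖) := by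
    intro x
    have hfx : Measurable fun y => f (x - y) := hf.comp (measurable_const.sub measurable_id)
    refine (abs_sintegral_comp_sub_le
      (G := fun u : Lp ℝ 2 (volume.restrict Ω) => ∫ y in Ω, b (u y) * f (x - y))
      (fun u => abs_integral_comp_mul_le hbbdd (F := fun y => f (x - y)) (fun y => hMf _) u)
      (by positivity)
      (abs_integral_comp_mul_sub_le hLb hblip hbbdd hfx.aestronglyMeasurable hMf0
        (fun y => hMf _)) _ _ φ ψ).trans ?_
    rw [htμ]
    have hMb : 0 ≤ Mb := (abs_nonneg _).trans (hbbdd 0)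
    gcongr
    exacts [hMVg φ, hLVg φ ψ]
  refine (eLpNorm_two_le_of_abs_le hpointwise).trans (ENNReal.ofReal_le_ofReal (le_of_eq ?_))
  have hsqrt : t ^ (1 / 2 : ℝ) * t ^ (1 / 2 : ℝ) = t := by
    rw [← Real.rpow_add' ht0 (by norm_num)]; norm_num
  rw [htμ]
  linear_combination (Lb * Mf * ‖φ - ψ‖ * MVg) * hsqrt

/-- If `φ ↦ ν_φ` assigns to each `φ ∈ C` a finite signed measure on `[−r,0]`
with `‖ν_φ‖_{TV} ≤ M_{Vg}` and `‖ν_φ − ν_ψ‖_{TV} ≤ L_{Vg}‖φ − ψ‖_C`, and `b` is Lipschitz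
with constant `L_b` and bounded by `M_b`, then
`F_c(φ)(x) = ∫_{[−r,0]} (∫_Ω b(φ(θ)(y)) f(x−y) dy) dν_φ(θ)` is globally Lipschitz:
`‖F_c(φ) − F_c(ψ)‖_{L²} ≤ M_f |Ω| (L_b M_{Vg} + M_b |Ω|^{1/2} L_{Vg}) ‖φ − ψ‖_C`. -/
theorem stmt4
    {n₀ : ℕ} (Ω : Set (EuclideanSpace ℝ (Fin n₀)))
    (hΩmeas : MeasurableSet Ω) (hΩbdd : Bornology.IsBounded Ω)
    (hΩpos : 0 < volume Ω)
    (r : ℝ) (hr : 0 < r)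
    (f : EuclideanSpace ℝ (Fin n₀) → ℝ) (hf : Measurable f)
    (Mf : ℝ) (hMf : ∀ z, |f z| ≤ Mf)
    (ν : C(Set.Icc (-r) (0:ℝ), Lp ℝ 2 (volume.restrict Ω)) →
      MeasureTheory.SignedMeasure (Set.Icc (-r) (0:ℝ)))
    (MVg : ℝ) (hMVg : ∀ φ, tvNorm (ν φ) ≤ MVg)
    (LVg : ℝ) (hLVg : ∀ φ ψ, tvNorm (ν φ - ν ψ) ≤ LVg * ‖φ - ψ‖)
    (b : ℝ → ℝ) (Lb : ℝ) (hLb : 0 ≤ Lb)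
    (hblip : ∀ s t : ℝ, |b s - b t| ≤ Lb * |s - t|)
    (Mb : ℝ) (hbbdd : ∀ s : ℝ, |b s| ≤ Mb)
    (φ ψ : C(Set.Icc (-r) (0:ℝ), Lp ℝ 2 (volume.restrict Ω))) :
    eLpNorm (fun x =>
        sintegral (ν φ) (fun θ => ∫ y in Ω, b (φ θ y) * f (x - y)) -
        sintegral (ν ψ) (fun θ => ∫ y in Ω, b (ψ θ y) * f (x - y)))
        2 (volume.restrict Ω)
      ≤ ENNReal.ofReal (Mf * (volume Ω).toReal *
          (Lb * MVg + Mb * (volume Ω).toReal ^ ((1:ℝ)/2) * LVg) * ‖φ - ψ‖) :=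
  stmt4_general Ω hΩbdd r f hf Mf hMf ν MVg hMVg LVg hLVg b Lb hblip Mb hbbdd φ ψ
end

section
/- Suppose φ ↦ ν_φ assigns to each φ ∈ C a finite signed measure ν_φ on [−r,0] such that (i) ‖ν_φ‖_{TV} ≤ M_{Vg} for all φ ∈ C, and (ii) for every θ ∈ [−r,0] and every sequence φⁿ → φ in C one has ν_{φⁿ}([−r,θ]) → ν_φ([−r,θ]). Let b : ℝ → ℝ be Lipschitz with constant L_b and satisfy |b(s)| ≤ C₁|s| + C₂ for all s. Then the map F_c : C → L²(Ω), F_c(φ)(x) := ∫_{[−r,0]} ( ∫_Ω b(φ(θ)(y)) f(x−y) dy ) dν_φ(θ), is continuous: φⁿ → φ in C implies ‖F_c(φⁿ) − F_c(φ)‖_{L²(Ω)} → 0. -/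
/-!
Write `F_c(φ)(x) = ∫ k(φ θ, x) dν_φ(θ)` with `k(u, x) = ∫_Ω b(u y) f(x - y) dy`. Since `b` is
Lipschitz, `f` is bounded and `‖u‖_{L¹(Ω)} ≤ |Ω|^{1/2} ‖u‖_{L²(Ω)}`, the map `u ↦ k(u, x)` is
Lipschitz on `L²(Ω)` uniformly in `x`. Hence `F_c(φⁿ)(x) - F_c(φ)(x)` is
`∫ (k(φⁿ θ, x) - k(φ θ, x)) dν_{φⁿ}`, of size `O(‖φⁿ - φ‖ M_{Vg})`, plus
`∫ k(φ θ, x) d(ν_{φⁿ} - ν_φ)`, which tends to `0` by Helly's second theorem: a continuous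
function on `[-r, 0]` is a uniform limit of combinations of indicators of the intervals
`[-r, θ]`, on which the measures converge by (ii), and (i) controls the error. Both terms are
bounded uniformly in `x` and `n`, so bounded convergence on `Ω` gives convergence in `L²(Ω)`.
-/

open MeasureTheory Set Filter Topology

open scoped NNReal ENNReal

namespace MeasureTheory.SignedMeasure

variable {α : Type*} [MeasurableSpace α] (ν : SignedMeasure α)

lemma tvNorm_nonneg : 0 ≤ tvNorm ν := ENNReal.toReal_nonneg

lemma tvNorm_eq_posPart_add_negPart :
    tvNorm ν = ν.toJordanDecomposition.posPart.real univ
      + ν.toJordanDecomposition.negPart.real univ := by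
  rw [tvNorm, totalVariation, Measure.add_apply,
    ENNReal.toReal_add (measure_ne_top _ _) (measure_ne_top _ _)]
  rfl

lemma apply_eq_posPart_sub_negPart {A : Set α} (hA : MeasurableSet A) :
    ν A = ν.toJordanDecomposition.posPart.real A - ν.toJordanDecomposition.negPart.real A := by
  conv_lhs => rw [← ν.toSignedMeasure_toJordanDecomposition]
  exact Measure.toSignedMeasure_sub_apply hA

lemma integrable_totalVariation_of_abs_le {g : α → ℝ} (hg : Measurable g) {K : ℝ}
    (hK : ∀ a, |g a| ≤ K) : Integrable g ν.totalVariation :=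
  Integrable.of_bound hg.aestronglyMeasurable K (ae_of_all _ hK)

lemma abs_sintegral_le {g : α → ℝ} {K : ℝ} (hK : ∀ a, |g a| ≤ K) :
    |sintegral ν g| ≤ K * tvNorm ν := by
  have hK' : ∀ a, ‖g a‖ ≤ K := hK
  have hpos := norm_integral_le_of_norm_le_const (μ := ν.toJordanDecomposition.posPart)
    (ae_of_all _ hK')
  have hneg := norm_integral_le_of_norm_le_const (μ := ν.toJordanDecomposition.negPart)
    (ae_of_all _ hK')
  rw [tvNorm_eq_posPart_add_negPart, mul_add]
  exact (abs_sub _ _).trans (add_le_add hpos hneg)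

variable {ν} in
lemma sintegral_sub {g h : α → ℝ} (hg : Integrable g ν.totalVariation)
    (hh : Integrable h ν.totalVariation) :
    sintegral ν (g - h) = sintegral ν g - sintegral ν h := by
  obtain ⟨hg₁, hg₂⟩ := integrable_add_measure.1 hg
  obtain ⟨hh₁, hh₂⟩ := integrable_add_measure.1 hh
  simp only [sintegral, Pi.sub_apply, integral_sub hg₁ hh₁, integral_sub hg₂ hh₂]
  ring

lemma abs_sintegral_sub_le {g h : α → ℝ} (hg : Integrable g ν.totalVariation)
    (hh : Integrable h ν.totalVariation) {K : ℝ} (hK : ∀ a, |g a - h a| ≤ K) :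
    |sintegral ν g - sintegral ν h| ≤ K * tvNorm ν := by
  rw [← sintegral_sub hg hh]
  exact abs_sintegral_le ν hK

lemma sintegral_sum_indicator {ι : Type*} (s : Finset ι) {A : ι → Set α}
    (hA : ∀ i, MeasurableSet (A i)) (c : ι → ℝ) :
    sintegral ν (fun a => ∑ i ∈ s, (A i).indicator (fun _ => c i) a) =
      ∑ i ∈ s, c i * ν (A i) := by
  have hint (μ : Measure α) [IsFiniteMeasure μ] (i : ι) :
      Integrable ((A i).indicator fun _ => c i) μ :=
    (integrable_const _).indicator (hA i)
  simp only [sintegral, integral_finsetSum _ fun i _ => hint _ i,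
    integral_indicator_const _ (hA _), smul_eq_mul, ← Finset.sum_sub_distrib,
    apply_eq_posPart_sub_negPart ν (hA _)]
  refine Finset.sum_congr rfl fun i _ => ?_
  ring

lemma stronglyMeasurable_sintegral {β : Type*} [MeasurableSpace β] {g : α → β → ℝ}
    (hg : StronglyMeasurable (Function.uncurry g)) :
    StronglyMeasurable fun y => sintegral ν fun a => g a y :=
  hg.integral_prod_left.sub hg.integral_prod_left

end MeasureTheory.SignedMeasure

section Helly

open SignedMeasure Finset

theorem le_projIcc_iff {α : Type*} [LinearOrder α] {a b : α} (hab : a ≤ b) (τ : Set.Icc a b)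
    {x : α} (hx : a ≤ x) : τ ≤ Set.projIcc a b hab x ↔ (τ : α) ≤ x := by
  rw [← Subtype.coe_le_coe, Set.coe_projIcc, max_eq_right (le_min hab hx)]
  simp [τ.2.2]

variable {α : Type*} [MeasurableSpace α]

theorem tendsto_sintegral_of_forall_approx {νs : ℕ → SignedMeasure α} {ν : SignedMeasure α}
    {M : ℝ} (hM : ∀ n, tvNorm (νs n) ≤ M) {g : α → ℝ} (hgm : Measurable g) {K : ℝ}
    (hgK : ∀ a, |g a| ≤ K)
    (happrox : ∀ ε > 0, ∃ s : α → ℝ, Measurable s ∧ (∀ a, |g a - s a| ≤ ε) ∧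
      Tendsto (fun n => sintegral (νs n) s) atTop (𝓝 (sintegral ν s))) :
    Tendsto (fun n => sintegral (νs n) g) atTop (𝓝 (sintegral ν g)) := by
  have hM0 : 0 ≤ M := (tvNorm_nonneg _).trans (hM 0)
  rw [Metric.tendsto_atTop]
  intro ε hε
  set T := M + tvNorm ν + 1
  have hT : 0 < T := by have := tvNorm_nonneg ν; positivity
  obtain ⟨s, hsm, hgs, hs⟩ := happrox (ε / (2 * T)) (by positivity)
  obtain ⟨N, hN⟩ := Metric.tendsto_atTop.1 hs (ε / 2) (half_pos hε)
  refine ⟨N, fun n hn => ?_⟩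
  have hsK (a : α) : |s a| ≤ K + ε / (2 * T) := by
    have := abs_sub_abs_le_abs_sub (s a) (g a)
    rw [abs_sub_comm] at this
    linarith [hgK a, hgs a]
  have hgi (μ : SignedMeasure α) := integrable_totalVariation_of_abs_le μ hgm hgK
  have hsi (μ : SignedMeasure α) := integrable_totalVariation_of_abs_le μ hsm hsK
  have h₁ := abs_sintegral_sub_le (νs n) (hgi _) (hsi _) hgs
  have h₂ := abs_sintegral_sub_le ν (hgi _) (hsi _) hgs
  have h₃ := hN n hn
  rw [Real.dist_eq] at h₃ ⊢
  have hsmall : ε / (2 * T) * tvNorm (νs n) + ε / (2 * T) * tvNorm ν < ε / 2 := by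
    rw [← mul_add, div_mul_eq_mul_div, div_lt_div_iff₀ (by positivity) two_pos]
    nlinarith [hM n]
  have h₄ := abs_sub_le (sintegral (νs n) g) (sintegral (νs n) s) (sintegral ν g)
  have h₅ := abs_sub_le (sintegral (νs n) s) (sintegral ν s) (sintegral ν g)
  rw [abs_sub_comm (sintegral ν s)] at h₅
  linarith

theorem exists_sum_indicator_Iic_approx {a b : ℝ} (hab : a ≤ b) {g : Set.Icc a b → ℝ}
    (hg : Continuous g) {ε : ℝ} (hε : 0 < ε) :
    ∃ (N : ℕ) (t : ℕ → Set.Icc a b) (c : ℕ → ℝ),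
      ∀ τ, |g τ - ∑ k ∈ range N, (Set.Iic (t k)).indicator (fun _ => c k) τ| ≤ ε := by
  obtain ⟨δ, hδ, hgδ⟩ :=
    Metric.uniformContinuous_iff.1 (CompactSpace.uniformContinuous_of_continuous hg) ε hε
  set t : ℕ → Set.Icc a b := fun k => Set.projIcc a b hab (a + k * δ)
  set j : Set.Icc a b → ℕ := fun τ => ⌈((τ : ℝ) - a) / δ⌉₊
  set N := ⌈(b - a) / δ⌉₊
  have hj_le (τ : Set.Icc a b) : j τ ≤ N :=
    Nat.ceil_mono (div_le_div_of_nonneg_right (by linarith [τ.2.2]) hδ.le)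
  have hle_t (τ : Set.Icc a b) (k : ℕ) : τ ≤ t k ↔ j τ ≤ k := by
    rw [le_projIcc_iff hab τ (le_add_of_nonneg_right (by positivity)), Nat.ceil_le,
      div_le_iff₀ hδ]
    constructor <;> intro h <;> linarith
  have hdist (τ : Set.Icc a b) : dist τ (t (j τ)) < δ := by
    have hx : 0 ≤ ((τ : ℝ) - a) / δ := div_nonneg (by linarith [τ.2.1]) hδ.le
    have hup : (j τ : ℝ) * δ < τ - a + δ := by
      have := mul_lt_mul_of_pos_right (Nat.ceil_lt_add_one hx) hδ
      rwa [add_mul, div_mul_cancel₀ _ hδ.ne', one_mul] at this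
    have hτt : (τ : ℝ) ≤ t (j τ) := (hle_t τ (j τ)).2 le_rfl
    have htj : (t (j τ) : ℝ) ≤ a + j τ * δ :=
      max_le (le_add_of_nonneg_right (by positivity)) (min_le_right _ _)
    rw [Subtype.dist_eq, Real.dist_eq, abs_sub_lt_iff]
    constructor <;> linarith
  -- Abel summation writes `g (t (j τ))` as `∑_{j τ ≤ k ≤ N} (G k - G (k + 1))`; the value
  -- `G (N + 1) = 0` makes the sum telescope to exactly `G (j τ)`.
  set G : ℕ → ℝ := fun k => if k ≤ N then g (t k) else 0
  refine ⟨N + 1, t, fun k => G k - G (k + 1), fun τ => ?_⟩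
  have hsum : ∑ k ∈ range (N + 1), (Set.Iic (t k)).indicator (fun _ => G k - G (k + 1)) τ
      = g (t (j τ)) := by
    simp only [Set.indicator, Set.mem_Iic, hle_t]
    rw [← Finset.sum_filter, Finset.range_eq_Ico, Finset.Ico_filter_le, Nat.zero_max]
    have htel := Finset.sum_Ico_sub G (by have := hj_le τ; omega : j τ ≤ N + 1)
    have hGj : G (j τ) = g (t (j τ)) := if_pos (hj_le τ)
    have hGN : G (N + 1) = 0 := if_neg (by omega)
    have hneg : ∑ k ∈ Ico (j τ) (N + 1), (G k - G (k + 1))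
        = -∑ k ∈ Ico (j τ) (N + 1), (G (k + 1) - G k) := by
      simp only [← Finset.sum_neg_distrib, neg_sub]
    linarith
  rw [hsum]
  exact (hgδ (hdist τ)).le

theorem tendsto_sintegral_sum_indicator {νs : ℕ → SignedMeasure α} {ν : SignedMeasure α}
    {ι : Type*} (s : Finset ι)
    {A : ι → Set α} (hA : ∀ i, MeasurableSet (A i))
    (hlim : ∀ i, Tendsto (fun n => νs n (A i)) atTop (𝓝 (ν (A i)))) (c : ι → ℝ) :
    Tendsto (fun n => sintegral (νs n) fun a => ∑ i ∈ s, (A i).indicator (fun _ => c i) a)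
      atTop (𝓝 (sintegral ν fun a => ∑ i ∈ s, (A i).indicator (fun _ => c i) a)) := by
  simp only [SignedMeasure.sintegral_sum_indicator _ s hA]
  exact tendsto_finsetSum s fun i _ => (hlim i).const_mul (c i)

theorem tendsto_sintegral_of_tendsto_Iic {a b : ℝ} (hab : a ≤ b)
    {νs : ℕ → SignedMeasure (Set.Icc a b)} {ν : SignedMeasure (Set.Icc a b)} {M : ℝ}
    (hM : ∀ n, tvNorm (νs n) ≤ M)
    (hcdf : ∀ θ, Tendsto (fun n => νs n (Set.Iic θ)) atTop (𝓝 (ν (Set.Iic θ))))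
    {g : Set.Icc a b → ℝ} (hg : Continuous g) :
    Tendsto (fun n => sintegral (νs n) g) atTop (𝓝 (sintegral ν g)) := by
  obtain ⟨K, hK⟩ := (isCompact_range hg).isBounded.exists_norm_le
  refine tendsto_sintegral_of_forall_approx hM hg.measurable (fun τ => hK _ ⟨τ, rfl⟩)
    fun ε hε => ?_
  obtain ⟨N, t, c, happrox⟩ := exists_sum_indicator_Iic_approx hab hg hε
  refine ⟨_, ?_, happrox, tendsto_sintegral_sum_indicator _ (fun _ => measurableSet_Iic)
    (fun k => hcdf (t k)) c⟩
  exact Finset.measurable_sum _ fun k _ => measurable_const.indicator measurableSet_Iic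

end Helly

section Lp

variable {X : Type*} [MeasurableSpace X] {ρ : Measure X} [IsFiniteMeasure ρ]

theorem integral_abs_le_sqrt_measure_mul_norm (u : Lp ℝ 2 ρ) :
    ∫ x, |u x| ∂ρ ≤ Real.sqrt (ρ.real univ) * ‖u‖ := by
  have h := eLpNorm_le_eLpNorm_mul_rpow_measure_univ (p := 1) (q := 2) (by norm_num)
    (Lp.aestronglyMeasurable u)
  have hne : ρ univ ^ (1 / (1 : ℝ≥0∞).toReal - 1 / (2 : ℝ≥0∞).toReal) ≠ ∞ := by norm_num
  have hrhs := ENNReal.mul_ne_top (Lp.eLpNorm_ne_top u) hne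
  rw [← ENNReal.toReal_le_toReal (ne_top_of_le_ne_top hrhs h) hrhs, ENNReal.toReal_mul,
    ← Lp.norm_def, ← ENNReal.toReal_rpow, eLpNorm_one_eq_lintegral_enorm,
    ← integral_norm_eq_lintegral_enorm (Lp.aestronglyMeasurable u)] at h
  rw [Real.sqrt_eq_rpow, mul_comm]
  norm_num at h
  exact h

theorem tendsto_eLpNorm_of_norm_le {β : Type*} [NormedAddCommGroup β] {p : ℝ≥0∞} (hp : 1 ≤ p)
    (hp' : p ≠ ∞) {D : ℕ → X → β} (hD : ∀ n, AEStronglyMeasurable (D n) ρ) {C : ℝ}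
    (hC : ∀ n x, ‖D n x‖ ≤ C) (hlim : ∀ᵐ x ∂ρ, Tendsto (fun n => D n x) atTop (𝓝 0)) :
    Tendsto (fun n => eLpNorm (D n) p ρ) atTop (𝓝 0) := by
  have hui : UnifIntegrable D p ρ := by
    refine unifIntegrable_of hp hp' hD fun ε _ => ⟨(C + 1).toNNReal, fun n => ?_⟩
    have hempty : {x | (C + 1).toNNReal ≤ ‖D n x‖₊} = ∅ := by
      refine eq_empty_of_forall_notMem fun x (hx : (C + 1).toNNReal ≤ ‖D n x‖₊) => ?_
      have := NNReal.coe_le_coe.2 hx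
      rw [coe_nnnorm] at this
      linarith [hC n x, Real.le_coe_toNNReal (C + 1)]
    simp [hempty]
  simpa using tendsto_Lp_finite_of_tendsto_ae hp hp' hD (MemLp.zero) hui hlim

end Lp

section KernelIntegral

variable {E X : Type*} [MeasurableSpace E] {μ : Measure E}

noncomputable def kernelIntegral (μ : Measure E) (b : ℝ → ℝ) (κ : X → E → ℝ) (u : E → ℝ)
    (x : X) : ℝ :=
  ∫ y, b (u y) * κ x y ∂μ

theorem abs_integral_mul_le_of_abs_le {w h k : E → ℝ} (hh : Integrable h μ)
    (hw : ∀ᵐ y ∂μ, |w y| ≤ h y) {M : ℝ} (hk : ∀ y, |k y| ≤ M) :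
    |∫ y, w y * k y ∂μ| ≤ M * ∫ y, h y ∂μ := by
  rw [← integral_const_mul]
  refine abs_integral_le_integral_abs.trans (integral_mono_of_nonneg
    (ae_of_all _ fun y => abs_nonneg _) (hh.const_mul M) ?_)
  filter_upwards [hw] with y hy
  rw [abs_mul, mul_comm M]
  exact mul_le_mul hy (hk y) (abs_nonneg _) ((abs_nonneg _).trans hy)

variable [IsFiniteMeasure μ] {b : ℝ → ℝ} {L : ℝ≥0}

theorem LipschitzWith.integrable_comp_Lp (hb : LipschitzWith L b) (u : Lp ℝ 2 μ) :
    Integrable (fun y => b (u y)) μ := by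
  refine Integrable.mono' ((integrable_const |b 0|).add
      (((Lp.memLp u).integrable one_le_two).abs.const_mul L))
    (hb.continuous.comp_aestronglyMeasurable (Lp.aestronglyMeasurable u))
    (ae_of_all _ fun y => ?_)
  have := hb.dist_le_mul (u y) 0
  rw [Real.dist_eq, Real.dist_eq, sub_zero] at this
  simp only [Real.norm_eq_abs, Pi.add_apply]
  linarith [abs_sub_abs_le_abs_sub (b (u y)) (b 0)]

variable {κ : X → E → ℝ} {M : ℝ}

theorem lipschitzWith_kernelIntegral (hb : LipschitzWith L b) (hκm : ∀ x, Measurable (κ x))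
    (hκM : ∀ x y, |κ x y| ≤ M) (hM : 0 ≤ M) (x : X) :
    LipschitzWith (M * L * Real.sqrt (μ.real univ)).toNNReal
      fun u : Lp ℝ 2 μ => kernelIntegral μ b κ u x := by
  have hint (u : Lp ℝ 2 μ) : Integrable (fun y => b (u y) * κ x y) μ :=
    (hb.integrable_comp_Lp u).mul_bdd (hκm x).aestronglyMeasurable (ae_of_all _ (hκM x))
  refine LipschitzWith.of_dist_le' fun u v => ?_
  rw [Real.dist_eq, kernelIntegral, kernelIntegral, ← integral_sub (hint u) (hint v)]
  simp only [← sub_mul]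
  have hlip : ∀ᵐ y ∂μ, |b (u y) - b (v y)| ≤ L * |(u - v : Lp ℝ 2 μ) y| := by
    filter_upwards [Lp.coeFn_sub u v] with y hy
    rw [hy, Pi.sub_apply, ← Real.dist_eq, ← Real.dist_eq]
    exact hb.dist_le_mul _ _
  have hL1 := ((Lp.memLp (u - v)).integrable one_le_two).abs.const_mul (L : ℝ)
  calc |∫ y, (b (u y) - b (v y)) * κ x y ∂μ|
      ≤ M * ∫ y, L * |(u - v : Lp ℝ 2 μ) y| ∂μ :=
        abs_integral_mul_le_of_abs_le hL1 hlip (hκM x)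
    _ ≤ M * L * Real.sqrt (μ.real univ) * dist u v := by
      rw [integral_const_mul, dist_eq_norm, mul_assoc M, mul_assoc M, mul_assoc (L : ℝ)]
      gcongr
      exact integral_abs_le_sqrt_measure_mul_norm _

theorem abs_kernelIntegral_zero_le (hκM : ∀ x y, |κ x y| ≤ M) (x : X) :
    |kernelIntegral μ b κ (0 : Lp ℝ 2 μ) x| ≤ |b 0| * M * μ.real univ := by
  have h0 : kernelIntegral μ b κ (0 : Lp ℝ 2 μ) x = ∫ y, b 0 * κ x y ∂μ := by
    refine integral_congr_ae ?_
    filter_upwards [Lp.coeFn_zero ℝ 2 μ] with y hy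
    rw [hy, Pi.zero_apply]
  rw [h0, ← Real.norm_eq_abs]
  refine norm_integral_le_of_norm_le_const (μ := μ) (C := |b 0| * M) (ae_of_all _ fun y => ?_)
  rw [Real.norm_eq_abs, abs_mul]
  exact mul_le_mul_of_nonneg_left (hκM x y) (abs_nonneg _)

theorem stronglyMeasurable_kernelIntegral [MeasurableSpace X] (hb : Continuous b)
    (hκ : Measurable (Function.uncurry κ)) {u : E → ℝ} (hu : Measurable u) :
    StronglyMeasurable (kernelIntegral μ b κ u) :=
  ((hb.measurable.comp (hu.comp measurable_snd)).mul hκ).stronglyMeasurable.integral_prod_right'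
    (ν := μ)

end KernelIntegral

section DelayFunctional

variable {V X : Type*} [NormedAddCommGroup V] {k : V → X → ℝ} {K : ℝ≥0} {A : ℝ}

theorem abs_le_add_mul_norm_of_lipschitzWith (hk : ∀ x, LipschitzWith K fun u => k u x)
    (hk0 : ∀ x, |k 0 x| ≤ A) (u : V) (x : X) : |k u x| ≤ A + K * ‖u‖ := by
  have := (hk x).dist_le_mul u 0
  rw [Real.dist_eq, dist_zero_right] at this
  linarith [abs_sub_abs_le_abs_sub (k u x) (k 0 x), hk0 x]

variable {Θ : Type*} [TopologicalSpace Θ]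

theorem abs_comp_continuousMap_le [CompactSpace Θ] (hk : ∀ x, LipschitzWith K fun u => k u x)
    (hk0 : ∀ x, |k 0 x| ≤ A) (φ : C(Θ, V)) (x : X) (θ : Θ) : |k (φ θ) x| ≤ A + K * ‖φ‖ :=
  (abs_le_add_mul_norm_of_lipschitzWith hk hk0 _ x).trans
    (by gcongr; exact φ.norm_coe_le_norm θ)

variable [MeasurableSpace Θ]

theorem stronglyMeasurable_sintegral_comp [TopologicalSpace.MetrizableSpace Θ]
    [SecondCountableTopology Θ] [OpensMeasurableSpace Θ] [MeasurableSpace X]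
    (hk : ∀ x, LipschitzWith K fun u => k u x) (hkm : ∀ u, Measurable (k u))
    (ν : SignedMeasure Θ) (φ : C(Θ, V)) :
    StronglyMeasurable fun x => sintegral ν fun θ => k (φ θ) x :=
  ν.stronglyMeasurable_sintegral (measurable_uncurry_of_continuous_of_measurable
    (fun x => (hk x).continuous.comp φ.continuous) fun θ => hkm (φ θ)).stronglyMeasurable

variable [CompactSpace Θ]

theorem abs_sintegral_comp_le (hk : ∀ x, LipschitzWith K fun u => k u x)
    (hk0 : ∀ x, |k 0 x| ≤ A) (ν : SignedMeasure Θ) (φ : C(Θ, V)) (x : X) :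
    |sintegral ν fun θ => k (φ θ) x| ≤ (A + K * ‖φ‖) * tvNorm ν :=
  ν.abs_sintegral_le (abs_comp_continuousMap_le hk hk0 φ x)

theorem integrable_totalVariation_comp_continuousMap [OpensMeasurableSpace Θ]
    (hk : ∀ x, LipschitzWith K fun u => k u x) (hk0 : ∀ x, |k 0 x| ≤ A) (ν : SignedMeasure Θ)
    (φ : C(Θ, V)) (x : X) :
    Integrable (fun θ => k (φ θ) x) ν.totalVariation :=
  ν.integrable_totalVariation_of_abs_le ((hk x).continuous.comp φ.continuous).measurable
    (abs_comp_continuousMap_le hk hk0 φ x)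

theorem memLp_sintegral_comp [TopologicalSpace.MetrizableSpace Θ] [SecondCountableTopology Θ]
    [OpensMeasurableSpace Θ] [MeasurableSpace X] (hk : ∀ x, LipschitzWith K fun u => k u x)
    (hk0 : ∀ x, |k 0 x| ≤ A) (hkm : ∀ u, Measurable (k u)) {ρ : Measure X} [IsFiniteMeasure ρ]
    (p : ℝ≥0∞) (ν : SignedMeasure Θ) (φ : C(Θ, V)) :
    MemLp (fun x => sintegral ν fun θ => k (φ θ) x) p ρ :=
  MemLp.of_bound (stronglyMeasurable_sintegral_comp hk hkm ν φ).aestronglyMeasurable _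
    (ae_of_all _ (abs_sintegral_comp_le hk hk0 ν φ))

end DelayFunctional

section Continuity

variable {V X : Type*} [NormedAddCommGroup V] {k : V → X → ℝ} {K : ℝ≥0} {A : ℝ}
  {a b : ℝ} {νs : ℕ → SignedMeasure (Icc a b)} {ν : SignedMeasure (Icc a b)} {M : ℝ}
  {φs : ℕ → C(Icc a b, V)} {φ : C(Icc a b, V)}

theorem tendsto_sintegral_comp (hab : a ≤ b) (hk : ∀ x, LipschitzWith K fun u => k u x)
    (hk0 : ∀ x, |k 0 x| ≤ A) (hM : ∀ n, tvNorm (νs n) ≤ M)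
    (hcdf : ∀ θ, Tendsto (fun n => νs n (Iic θ)) atTop (𝓝 (ν (Iic θ))))
    (hφ : Tendsto φs atTop (𝓝 φ)) (x : X) :
    Tendsto (fun n => sintegral (νs n) fun θ => k (φs n θ) x) atTop
      (𝓝 (sintegral ν fun θ => k (φ θ) x)) := by
  have hM0 : 0 ≤ M := (SignedMeasure.tvNorm_nonneg _).trans (hM 0)
  have hclose (n : ℕ) : |(sintegral (νs n) fun θ => k (φs n θ) x)
      - sintegral (νs n) fun θ => k (φ θ) x| ≤ K * dist (φs n) φ * M := by
    refine ((νs n).abs_sintegral_sub_le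
      (integrable_totalVariation_comp_continuousMap hk hk0 _ _ x)
      (integrable_totalVariation_comp_continuousMap hk hk0 _ _ x) fun θ => ?_).trans
      (by gcongr; exact hM n)
    rw [← Real.dist_eq]
    exact ((hk x).dist_le_mul _ _).trans (by gcongr; exact ContinuousMap.dist_apply_le_dist θ)
  have hlim_close : Tendsto (fun n => (sintegral (νs n) fun θ => k (φs n θ) x)
      - sintegral (νs n) fun θ => k (φ θ) x) atTop (𝓝 0) := by
    refine squeeze_zero_norm hclose ?_
    simpa using ((tendsto_iff_dist_tendsto_zero.1 hφ).const_mul (K : ℝ)).mul_const M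
  have hhelly : Tendsto (fun n => sintegral (νs n) fun θ => k (φ θ) x) atTop
      (𝓝 (sintegral ν fun θ => k (φ θ) x)) :=
    tendsto_sintegral_of_tendsto_Iic hab hM hcdf ((hk x).continuous.comp φ.continuous)
  simpa only [sub_add_cancel, zero_add] using hlim_close.add hhelly

theorem tendsto_eLpNorm_sintegral_comp_sub [MeasurableSpace X] (hab : a ≤ b)
    (hk : ∀ x, LipschitzWith K fun u => k u x) (hk0 : ∀ x, |k 0 x| ≤ A)
    (hkm : ∀ u, Measurable (k u)) {ρ : Measure X} [IsFiniteMeasure ρ] {p : ℝ≥0∞} (hp : 1 ≤ p)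
    (hp' : p ≠ ∞) (hM : ∀ n, tvNorm (νs n) ≤ M)
    (hcdf : ∀ θ, Tendsto (fun n => νs n (Iic θ)) atTop (𝓝 (ν (Iic θ))))
    (hφ : Tendsto φs atTop (𝓝 φ)) :
    Tendsto (fun n => eLpNorm (fun x => (sintegral (νs n) fun θ => k (φs n θ) x)
      - sintegral ν fun θ => k (φ θ) x) p ρ) atTop (𝓝 0) := by
  obtain ⟨R, hR⟩ := hφ.norm.bddAbove_range
  have hbound (n : ℕ) (x : X) : ‖(sintegral (νs n) fun θ => k (φs n θ) x)
      - sintegral ν fun θ => k (φ θ) x‖ ≤ (A + K * R) * M + (A + K * ‖φ‖) * tvNorm ν := by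
    have hA : 0 ≤ A + K * R := by
      have := (abs_nonneg _).trans (hk0 x)
      have := (norm_nonneg _).trans (hR ⟨n, rfl⟩)
      positivity
    have hn : (A + K * ‖φs n‖) * tvNorm (νs n) ≤ (A + K * R) * M :=
      mul_le_mul (by gcongr; exact hR ⟨n, rfl⟩) (hM n) (SignedMeasure.tvNorm_nonneg _) hA
    rw [Real.norm_eq_abs]
    refine (abs_sub _ _).trans (add_le_add ((abs_sintegral_comp_le hk hk0 _ _ x).trans hn)
      (abs_sintegral_comp_le hk hk0 _ _ x))
  refine tendsto_eLpNorm_of_norm_le hp hp' (fun n => ?_) hbound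
    (ae_of_all _ fun x => ?_)
  · exact ((stronglyMeasurable_sintegral_comp hk hkm _ _).sub
      (stronglyMeasurable_sintegral_comp hk hkm _ _)).aestronglyMeasurable
  · simpa using (tendsto_sintegral_comp hab hk hk0 hM hcdf hφ x).sub_const
      (sintegral ν fun θ => k (φ θ) x)

end Continuity

theorem stmt5_general
    {n₀ : ℕ} (Ω : Set (EuclideanSpace ℝ (Fin n₀)))
    (hΩbdd : Bornology.IsBounded Ω)
    (r : ℝ) (hr : 0 < r)
    (f : EuclideanSpace ℝ (Fin n₀) → ℝ) (hf : Measurable f)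
    (Mf : ℝ) (hMf : ∀ z, |f z| ≤ Mf)
    (ν : C(Set.Icc (-r) (0:ℝ), Lp ℝ 2 (volume.restrict Ω)) →
      MeasureTheory.SignedMeasure (Set.Icc (-r) (0:ℝ)))
    (MVg : ℝ) (hMVg : ∀ φ, tvNorm (ν φ) ≤ MVg)
    (hνcont : ∀ θ : Set.Icc (-r) (0:ℝ),
      ∀ (φseq : ℕ → C(Set.Icc (-r) (0:ℝ), Lp ℝ 2 (volume.restrict Ω)))
        (φ : C(Set.Icc (-r) (0:ℝ), Lp ℝ 2 (volume.restrict Ω))),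
        Tendsto (fun n => ‖φseq n - φ‖) atTop (nhds 0) →
        Tendsto (fun n => ν (φseq n) {τ : Set.Icc (-r) (0:ℝ) | (τ : ℝ) ≤ (θ : ℝ)})
          atTop (nhds (ν φ {τ : Set.Icc (-r) (0:ℝ) | (τ : ℝ) ≤ (θ : ℝ)})))
    (b : ℝ → ℝ) (Lb : ℝ)
    (hblip : ∀ s t : ℝ, |b s - b t| ≤ Lb * |s - t|) :
    (∀ φ : C(Set.Icc (-r) (0:ℝ), Lp ℝ 2 (volume.restrict Ω)),
      MemLp (fun x => sintegral (ν φ) (fun θ => ∫ y in Ω, b (φ θ y) * f (x - y)))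
        2 (volume.restrict Ω)) ∧
    (∀ (φseq : ℕ → C(Set.Icc (-r) (0:ℝ), Lp ℝ 2 (volume.restrict Ω)))
       (φ : C(Set.Icc (-r) (0:ℝ), Lp ℝ 2 (volume.restrict Ω))),
      Tendsto (fun n => ‖φseq n - φ‖) atTop (nhds 0) →
      Tendsto (fun n => eLpNorm (fun x =>
          sintegral (ν (φseq n)) (fun θ => ∫ y in Ω, b ((φseq n) θ y) * f (x - y)) -
          sintegral (ν φ) (fun θ => ∫ y in Ω, b (φ θ y) * f (x - y)))
          2 (volume.restrict Ω)) atTop (nhds 0)) := by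
  have : IsFiniteMeasure (volume.restrict Ω) :=
    isFiniteMeasure_restrict.2 hΩbdd.measure_lt_top.ne
  have hb : LipschitzWith Lb.toNNReal b := LipschitzWith.of_dist_le' hblip
  let κ : EuclideanSpace ℝ (Fin n₀) → EuclideanSpace ℝ (Fin n₀) → ℝ := fun x y => f (x - y)
  let k (u : Lp ℝ 2 (volume.restrict Ω)) := kernelIntegral (volume.restrict Ω) b κ u
  have hκ : Measurable (Function.uncurry κ) := hf.comp measurable_sub
  have hk := lipschitzWith_kernelIntegral (μ := volume.restrict Ω) (κ := κ) hb
    (fun _ => hκ.of_uncurry_left) (fun _ _ => hMf _) ((abs_nonneg _).trans (hMf 0))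
  have hk0 := abs_kernelIntegral_zero_le (μ := volume.restrict Ω) (b := b) (κ := κ)
    (fun _ _ => hMf _)
  have hkm (u : Lp ℝ 2 (volume.restrict Ω)) : Measurable (k u) :=
    (stronglyMeasurable_kernelIntegral hb.continuous hκ
      (Lp.stronglyMeasurable u).measurable).measurable
  refine ⟨fun φ => ?_, fun φs φ hφ => ?_⟩
  · exact memLp_sintegral_comp (k := k) hk hk0 hkm 2 _ φ
  · have hφ' : Tendsto φs atTop (𝓝 φ) := tendsto_iff_norm_sub_tendsto_zero.2 hφ
    -- `{τ | (τ : ℝ) ≤ θ}` is `Iic θ` for the subtype order on `Icc (-r) 0`.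
    have hcdf (θ : Set.Icc (-r) (0:ℝ)) := hνcont θ φs φ hφ
    exact tendsto_eLpNorm_sintegral_comp_sub (k := k) (neg_nonpos.2 hr.le) hk hk0 hkm
      one_le_two ENNReal.ofNat_ne_top (fun n => hMVg _) hcdf hφ'

/-- continuous-delay part of Lemma 1: If `φ ↦ ν_φ` has uniformly bounded
total variation (A1) and is pointwise continuous in the sense that `φⁿ → φ` in `C`
implies `ν_{φⁿ}([−r,θ]) → ν_φ([−r,θ])` for every `θ` (A2), and `b` is Lipschitz with
constant `L_b` and of linear growth `|b(s)| ≤ C₁|s| + C₂`, then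
`F_c(φ)(x) = ∫_{[−r,0]} (∫_Ω b(φ(θ)(y)) f(x−y) dy) dν_φ(θ)` defines a continuous map
`C → L²(Ω)`: `φⁿ → φ` in `C` implies `‖F_c(φⁿ) − F_c(φ)‖_{L²(Ω)} → 0`. -/
theorem stmt5
    {n₀ : ℕ} (Ω : Set (EuclideanSpace ℝ (Fin n₀)))
    (hΩmeas : MeasurableSet Ω) (hΩbdd : Bornology.IsBounded Ω)
    (hΩpos : 0 < volume Ω)
    (r : ℝ) (hr : 0 < r)
    (f : EuclideanSpace ℝ (Fin n₀) → ℝ) (hf : Measurable f)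
    (Mf : ℝ) (hMf : ∀ z, |f z| ≤ Mf)
    (ν : C(Set.Icc (-r) (0:ℝ), Lp ℝ 2 (volume.restrict Ω)) →
      MeasureTheory.SignedMeasure (Set.Icc (-r) (0:ℝ)))
    (MVg : ℝ) (hMVg : ∀ φ, tvNorm (ν φ) ≤ MVg)
    (hνcont : ∀ θ : Set.Icc (-r) (0:ℝ),
      ∀ (φseq : ℕ → C(Set.Icc (-r) (0:ℝ), Lp ℝ 2 (volume.restrict Ω)))
        (φ : C(Set.Icc (-r) (0:ℝ), Lp ℝ 2 (volume.restrict Ω))),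
        Tendsto (fun n => ‖φseq n - φ‖) atTop (nhds 0) →
        Tendsto (fun n => ν (φseq n) {τ : Set.Icc (-r) (0:ℝ) | (τ : ℝ) ≤ (θ : ℝ)})
          atTop (nhds (ν φ {τ : Set.Icc (-r) (0:ℝ) | (τ : ℝ) ≤ (θ : ℝ)})))
    (b : ℝ → ℝ) (Lb : ℝ) (hLb : 0 ≤ Lb)
    (hblip : ∀ s t : ℝ, |b s - b t| ≤ Lb * |s - t|)
    (C₁ C₂ : ℝ) (hC₁ : 0 ≤ C₁) (hC₂ : 0 ≤ C₂)
    (hbgrowth : ∀ s : ℝ, |b s| ≤ C₁ * |s| + C₂) :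
    (∀ φ : C(Set.Icc (-r) (0:ℝ), Lp ℝ 2 (volume.restrict Ω)),
      MemLp (fun x => sintegral (ν φ) (fun θ => ∫ y in Ω, b (φ θ y) * f (x - y)))
        2 (volume.restrict Ω)) ∧
    (∀ (φseq : ℕ → C(Set.Icc (-r) (0:ℝ), Lp ℝ 2 (volume.restrict Ω)))
       (φ : C(Set.Icc (-r) (0:ℝ), Lp ℝ 2 (volume.restrict Ω))),
      Tendsto (fun n => ‖φseq n - φ‖) atTop (nhds 0) →
      Tendsto (fun n => eLpNorm (fun x =>
          sintegral (ν (φseq n)) (fun θ => ∫ y in Ω, b ((φseq n) θ y) * f (x - y)) -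
          sintegral (ν φ) (fun θ => ∫ y in Ω, b (φ θ y) * f (x - y)))
          2 (volume.restrict Ω)) atTop (nhds 0)) :=
  stmt5_general Ω hΩbdd r hr f hf Mf hMf ν MVg hMVg hνcont b Lb hblip
end

section
/- Let η_k : C → [0,r] and h_k : C → ℝ (k ∈ ℕ) be continuous maps such that the series Σ_k h_k(φ) converges absolutely for every φ ∈ C and uniformly on every bounded subset of C (i.e. for every bounded B ⊆ C, sup_{φ∈B} Σ_{k≥N} |h_k(φ)| → 0 as N → ∞). Let b : ℝ → ℝ be Lipschitz with constant L_b and satisfy |b(s)| ≤ C₁|s| + C₂ for all s. Then the map F_d : C → L²(Ω) defined by F_d(φ)(x) := Σ_k ( ∫_Ω b(φ(−η_k(φ))(y)) f(x−y) dy ) · h_k(φ) is well defined and continuous: φⁿ → φ in C implies ‖F_d(φⁿ) − F_d(φ)‖_{L²(Ω)} → 0. -/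
open MeasureTheory Set Filter Topology
open scoped NNReal ENNReal

/-!
Write the `k`-th summand as `I(u_k φ)(x) · h_k(φ)` with `u_k φ = φ(-η_k(φ)) ∈ L²(Ω)` and
`I(w)(x) = ∫_Ω b(w y) f(x - y) dy`. Since `b` is Lipschitz, `f` is bounded and
`‖w‖_{L¹} ≤ |Ω|^{1/2} ‖w‖_{L²}`, the map `w ↦ I(w)(x)` is Lipschitz with linear growth, uniformly
in `x`. Hence the series is dominated by `C(‖φ‖) Σ_k |h_k(φ)|`, so `F_d(φ)` is bounded and
measurable. Along `φⁿ → φ`, the difference `F_d(φⁿ) - F_d(φ)` is bounded, uniformly in `x`, by a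
series whose terms tend to `0` (continuity of `u_k` and `h_k`) and whose tails are uniformly small
(all `φⁿ` lie in one bounded set). So it tends to `0` uniformly, hence in `L²` of the finite
measure space `Ω`.
-/

lemma tendsto_tsum_of_dominated_uniform_tail {e p : ℕ → ℕ → ℝ} {K : ℝ} (hK : 0 ≤ K)
    (he : ∀ n k, 0 ≤ e n k) (hep : ∀ n k, e n k ≤ K * p n k) (hp : ∀ n, Summable (p n))
    (hlim : ∀ k, Tendsto (fun n => e n k) atTop (𝓝 0))
    (htail : ∀ ε > 0, ∃ N, ∀ n, ∑' k, p n (k + N) < ε) :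
    Tendsto (fun n => ∑' k, e n k) atTop (𝓝 0) := by
  have he_sum : ∀ n, Summable (e n) := fun n =>
    ((hp n).mul_left K).of_nonneg_of_le (he n) (hep n)
  rw [Metric.tendsto_atTop]
  intro ε hε
  obtain ⟨N, hN⟩ := htail (ε / (2 * (K + 1))) (by positivity)
  have hhead : Tendsto (fun n => ∑ k ∈ Finset.range N, e n k) atTop (𝓝 0) := by
    simpa using tendsto_finsetSum (Finset.range N) fun k _ => hlim k
  obtain ⟨M, hM⟩ := eventually_atTop.1 (hhead.eventually (gt_mem_nhds (half_pos hε)))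
  refine ⟨M, fun n hn => ?_⟩
  have htail_e : ∑' k, e n (k + N) < ε / 2 :=
    calc ∑' k, e n (k + N) ≤ ∑' k, K * p n (k + N) :=
          ((summable_nat_add_iff N).2 (he_sum n)).tsum_le_tsum (fun k => hep n (k + N))
            (((summable_nat_add_iff N).2 (hp n)).mul_left K)
      _ ≤ K * (ε / (2 * (K + 1))) := by rw [tsum_mul_left]; gcongr; exact (hN n).le
      _ < ε / 2 := by rw [mul_div_assoc', div_lt_div_iff₀ (by positivity) two_pos]; nlinarith
  rw [Real.dist_0_eq_abs, abs_of_nonneg (tsum_nonneg (he n)),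
    ← (he_sum n).sum_add_tsum_nat_add N]
  linarith [hM n hn]

lemma tendsto_eLpNorm_zero_of_norm_le {ι α F : Type*} [MeasurableSpace α] {ν : Measure α}
    [IsFiniteMeasure ν] [NormedAddCommGroup F] {p : ℝ≥0∞} {l : Filter ι} {G : ι → α → F}
    {s : ι → ℝ} (hGs : ∀ i x, ‖G i x‖ ≤ s i) (hs : Tendsto s l (𝓝 0)) :
    Tendsto (fun i => eLpNorm (G i) p ν) l (𝓝 0) := by
  have hlim : Tendsto (fun i => ν univ ^ p.toReal⁻¹ * ENNReal.ofReal (s i)) l (𝓝 0) := by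
    simpa using ENNReal.Tendsto.const_mul (ENNReal.tendsto_ofReal hs)
      (Or.inr (by finiteness))
  exact tendsto_of_tendsto_of_tendsto_of_le_of_le tendsto_const_nhds hlim (fun _ => zero_le)
    fun i => eLpNorm_le_of_ae_bound (ae_of_all _ (hGs i))

lemma memLp_tsum_of_norm_le {α F : Type*} [MeasurableSpace α] {ν : Measure α}
    [IsFiniteMeasure ν] [NormedAddCommGroup F] [CompleteSpace F] {p : ℝ≥0∞}
    {g : ℕ → α → F} {c : ℕ → ℝ} (hg : ∀ k, AEStronglyMeasurable (g k) ν) (hc : Summable c)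
    (hgc : ∀ k x, ‖g k x‖ ≤ c k) :
    MemLp (fun x => ∑' k, g k x) p ν := by
  refine MemLp.of_bound ?_ (∑' k, c k)
    (ae_of_all _ fun x => tsum_of_norm_bounded hc.hasSum (hgc · x))
  exact aestronglyMeasurable_of_tendsto_ae atTop
    (fun N => Finset.aestronglyMeasurable_fun_sum _ fun k _ => hg k)
    (ae_of_all _ fun x => (hc.of_norm_bounded (hgc · x)).hasSum.tendsto_sum_nat)

lemma integral_abs_le_mul_norm {α : Type*} [MeasurableSpace α] {μ : Measure α}
    [IsFiniteMeasure μ] {q : ℝ≥0∞} [Fact (1 ≤ q)] (u : Lp ℝ q μ) :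
    ∫ y, |u y| ∂μ ≤ (μ univ ^ (1 - 1 / q.toReal)).toReal * ‖u‖ := by
  have hexp : 0 ≤ 1 - 1 / q.toReal := by
    rcases eq_or_ne q ⊤ with rfl | hq
    · simp
    · have : 1 ≤ q.toReal := by simpa using ENNReal.toReal_mono hq (Fact.out : (1 : ℝ≥0∞) ≤ q)
      exact sub_nonneg.2 ((div_le_one (by linarith)).2 this)
  have h := eLpNorm_le_eLpNorm_mul_rpow_measure_univ (μ := μ) (Fact.out : (1 : ℝ≥0∞) ≤ q)
    (Lp.aestronglyMeasurable u)
  rw [ENNReal.toReal_one, div_one] at h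
  simp only [← Real.norm_eq_abs]
  rw [integral_norm_eq_lintegral_enorm (Lp.aestronglyMeasurable u),
    ← eLpNorm_one_eq_lintegral_enorm, Lp.norm_def, mul_comm, ← ENNReal.toReal_mul]
  exact ENNReal.toReal_mono (ENNReal.mul_ne_top (Lp.eLpNorm_ne_top u)
    (ENNReal.rpow_ne_top_of_nonneg hexp (measure_ne_top μ univ))) h

lemma LipschitzWith.abs_le_add {b : ℝ → ℝ} {K : ℝ≥0} (hb : LipschitzWith K b) (s : ℝ) :
    |b s| ≤ |b 0| + K * |s| := by
  have := hb.dist_le_mul s 0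
  rw [Real.dist_eq, Real.dist_eq, sub_zero] at this
  linarith [abs_sub_abs_le_abs_sub (b s) (b 0)]

section NonlocalTerm

variable {E : Type*} [MeasurableSpace E] [AddGroup E]
  {μ : Measure E} {b : ℝ → ℝ} {K : ℝ≥0} {f : E → ℝ} {Mf : ℝ}

noncomputable def nonlocalTerm (μ : Measure E) (b : ℝ → ℝ) (f : E → ℝ) (u : E → ℝ) (x : E) :
    ℝ :=
  ∫ y, b (u y) * f (x - y) ∂μ

lemma stronglyMeasurable_nonlocalTerm [SFinite μ] [MeasurableSub₂ E] (hb : Measurable b)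
    (hf : Measurable f) {u : E → ℝ} (hu : Measurable u) :
    StronglyMeasurable (nonlocalTerm μ b f u) :=
  StronglyMeasurable.integral_prod_right
    ((hb.comp (hu.comp measurable_snd)).mul
      (hf.comp (measurable_fst.sub measurable_snd))).stronglyMeasurable

lemma integrable_nonlocalTerm_integrand [IsFiniteMeasure μ] [MeasurableSub₂ E]
    (hb : LipschitzWith K b) (hf : Measurable f) (hMf : ∀ z, |f z| ≤ Mf) {u : E → ℝ}
    (hu : Integrable u μ) (x : E) :
    Integrable (fun y => b (u y) * f (x - y)) μ := by
  have hbu : Integrable (fun y => b (u y)) μ :=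
    ((integrable_const |b 0|).add (hu.norm.const_mul K)).mono'
      (hb.continuous.comp_aestronglyMeasurable hu.1) (ae_of_all _ fun y => hb.abs_le_add (u y))
  exact hbu.mul_bdd (hf.comp (measurable_const_sub x)).aestronglyMeasurable
    (ae_of_all _ fun y => hMf (x - y))

lemma abs_nonlocalTerm_sub_le [IsFiniteMeasure μ] [MeasurableSub₂ E] (hb : LipschitzWith K b)
    (hf : Measurable f) (hMf : ∀ z, |f z| ≤ Mf) {u v : E → ℝ} (hu : Integrable u μ)
    (hv : Integrable v μ) (x : E) :
    |nonlocalTerm μ b f u x - nonlocalTerm μ b f v x| ≤ Mf * K * ∫ y, |u y - v y| ∂μ := by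
  rw [nonlocalTerm, nonlocalTerm,
    ← integral_sub (integrable_nonlocalTerm_integrand hb hf hMf hu x)
      (integrable_nonlocalTerm_integrand hb hf hMf hv x),
    ← integral_const_mul, ← Real.norm_eq_abs]
  refine norm_integral_le_of_norm_le ((hu.sub hv).abs.const_mul _) (ae_of_all _ fun y => ?_)
  calc ‖b (u y) * f (x - y) - b (v y) * f (x - y)‖ = |b (u y) - b (v y)| * |f (x - y)| := by
        rw [← sub_mul, Real.norm_eq_abs, abs_mul]
    _ ≤ K * |u y - v y| * Mf := by
        gcongr
        · rw [← Real.dist_eq, ← Real.dist_eq]; exact hb.dist_le_mul _ _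
        · exact hMf _
    _ = Mf * K * |u y - v y| := by ring

lemma abs_nonlocalTerm_zero_le [IsFiniteMeasure μ] (hMf : ∀ z, |f z| ≤ Mf) (x : E) :
    |nonlocalTerm μ b f 0 x| ≤ |b 0| * Mf * μ.real univ := by
  rw [← Real.norm_eq_abs]
  refine norm_integral_le_of_norm_le_const (μ := μ) (ae_of_all _ fun y => ?_)
  rw [Pi.zero_apply, Real.norm_eq_abs, abs_mul]
  gcongr
  exact hMf _

lemma abs_nonlocalTerm_sub_le_norm [IsFiniteMeasure μ] [MeasurableSub₂ E] {q : ℝ≥0∞}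
    [Fact (1 ≤ q)]
    (hb : LipschitzWith K b) (hf : Measurable f) (hMf : ∀ z, |f z| ≤ Mf) (u v : Lp ℝ q μ)
    (x : E) :
    |nonlocalTerm μ b f u x - nonlocalTerm μ b f v x| ≤
      Mf * K * (μ univ ^ (1 - 1 / q.toReal)).toReal * ‖u - v‖ := by
  have hMf0 : 0 ≤ Mf := (abs_nonneg _).trans (hMf 0)
  have huv : ∫ y, |u y - v y| ∂μ = ∫ y, |(u - v) y| ∂μ :=
    integral_congr_ae ((Lp.coeFn_sub u v).mono fun y hy => by simp only [hy, Pi.sub_apply])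
  calc _ ≤ Mf * K * ∫ y, |u y - v y| ∂μ := abs_nonlocalTerm_sub_le hb hf hMf
        ((Lp.memLp u).integrable Fact.out) ((Lp.memLp v).integrable Fact.out) x
    _ ≤ _ := by
        rw [huv, mul_assoc _ _ ‖u - v‖]
        gcongr
        exact integral_abs_le_mul_norm _

lemma abs_nonlocalTerm_le_norm [IsFiniteMeasure μ] [MeasurableSub₂ E] {q : ℝ≥0∞}
    [Fact (1 ≤ q)]
    (hb : LipschitzWith K b) (hf : Measurable f) (hMf : ∀ z, |f z| ≤ Mf) (u : Lp ℝ q μ)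
    (x : E) :
    |nonlocalTerm μ b f u x| ≤
      |b 0| * Mf * μ.real univ + Mf * K * (μ univ ^ (1 - 1 / q.toReal)).toReal * ‖u‖ := by
  have hMf0 : 0 ≤ Mf := (abs_nonneg _).trans (hMf 0)
  have hsub := abs_nonlocalTerm_sub_le hb hf hMf ((Lp.memLp u).integrable Fact.out)
    (integrable_zero E ℝ μ) x
  simp only [Pi.zero_apply, sub_zero] at hsub
  have hu :
      Mf * K * ∫ y, |u y| ∂μ ≤ Mf * K * ((μ univ ^ (1 - 1 / q.toReal)).toReal * ‖u‖) := by
    gcongr; exact integral_abs_le_mul_norm u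
  linarith [abs_sub_abs_le_abs_sub (nonlocalTerm μ b f u x) (nonlocalTerm μ b f 0 x),
    abs_nonlocalTerm_zero_le (μ := μ) (b := b) hMf x]

end NonlocalTerm

section DelaySeries

variable {X W P : Type*} [SeminormedAddCommGroup W] [SeminormedAddCommGroup P]

noncomputable def delaySeries (I : W → X → ℝ) (u : ℕ → P → W) (h : ℕ → P → ℝ) (χ : P)
    (x : X) : ℝ :=
  ∑' k, I (u k χ) x * h k χ

variable {I : W → X → ℝ} {L A₀ : ℝ} {u : ℕ → P → W} {h : ℕ → P → ℝ}

lemma abs_delaySeries_term_le (hL : 0 ≤ L) (hI_le : ∀ w x, |I w x| ≤ A₀ + L * ‖w‖)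
    (hu_le : ∀ k χ, ‖u k χ‖ ≤ ‖χ‖) (k : ℕ) (χ : P) (x : X) :
    |I (u k χ) x * h k χ| ≤ (A₀ + L * ‖χ‖) * |h k χ| := by
  rw [abs_mul]
  gcongr
  exact (hI_le _ x).trans (by gcongr; exact hu_le k χ)

lemma summable_delaySeries_term (hL : 0 ≤ L) (hI_le : ∀ w x, |I w x| ≤ A₀ + L * ‖w‖)
    (hu_le : ∀ k χ, ‖u k χ‖ ≤ ‖χ‖) (hh_abs : ∀ χ, Summable fun k => |h k χ|) (χ : P) (x : X) :
    Summable fun k => I (u k χ) x * h k χ :=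
  ((hh_abs χ).mul_left _).of_norm_bounded (abs_delaySeries_term_le hL hI_le hu_le · χ x)

lemma memLp_delaySeries [MeasurableSpace X] {ν : Measure X} [IsFiniteMeasure ν] {p : ℝ≥0∞}
    (hL : 0 ≤ L) (hI_meas : ∀ w, AEStronglyMeasurable (I w) ν)
    (hI_le : ∀ w x, |I w x| ≤ A₀ + L * ‖w‖) (hu_le : ∀ k χ, ‖u k χ‖ ≤ ‖χ‖)
    (hh_abs : ∀ χ, Summable fun k => |h k χ|) (χ : P) :
    MemLp (delaySeries I u h χ) p ν :=
  memLp_tsum_of_norm_le (fun _ => (hI_meas _).mul_const _) ((hh_abs χ).mul_left _)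
    (abs_delaySeries_term_le hL hI_le hu_le · χ)

lemma abs_apply_mul_sub_apply_mul_le (hL : 0 ≤ L)
    (hI_sub : ∀ w w' x, |I w x - I w' x| ≤ L * ‖w - w'‖) (hI_le : ∀ w x, |I w x| ≤ A₀ + L * ‖w‖)
    {R : ℝ} {w w' : W} (hw' : ‖w'‖ ≤ R) (s t : ℝ) (x : X) :
    |I w x * s - I w' x * t| ≤ L * ‖w - w'‖ * |s| + (A₀ + L * R) * |s - t| :=
  calc |I w x * s - I w' x * t| = |(I w x - I w' x) * s + I w' x * (s - t)| := by ring_nf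
    _ ≤ |I w x - I w' x| * |s| + |I w' x| * |s - t| := by
        rw [← abs_mul, ← abs_mul]; exact abs_add_le _ _
    _ ≤ L * ‖w - w'‖ * |s| + (A₀ + L * R) * |s - t| := by
        gcongr
        · exact hI_sub w w' x
        · exact (hI_le w' x).trans (by gcongr)

lemma abs_delaySeries_sub_le (hL : 0 ≤ L) (hI_sub : ∀ w w' x, |I w x - I w' x| ≤ L * ‖w - w'‖)
    (hI_le : ∀ w x, |I w x| ≤ A₀ + L * ‖w‖) (hu_le : ∀ k χ, ‖u k χ‖ ≤ ‖χ‖)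
    (hh_abs : ∀ χ, Summable fun k => |h k χ|) {R : ℝ} {ψ χ : P} (hχR : ‖χ‖ ≤ R)
    (hsum : Summable fun k =>
      L * ‖u k ψ - u k χ‖ * |h k ψ| + (A₀ + L * R) * |h k ψ - h k χ|) (x : X) :
    |delaySeries I u h ψ x - delaySeries I u h χ x| ≤
      ∑' k, (L * ‖u k ψ - u k χ‖ * |h k ψ| + (A₀ + L * R) * |h k ψ - h k χ|) := by
  rw [delaySeries, delaySeries,
    ← (summable_delaySeries_term hL hI_le hu_le hh_abs ψ x).tsum_sub
      (summable_delaySeries_term hL hI_le hu_le hh_abs χ x)]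
  exact tsum_of_norm_bounded hsum.hasSum fun k => (Real.norm_eq_abs _).trans_le
    (abs_apply_mul_sub_apply_mul_le hL hI_sub hI_le ((hu_le k χ).trans hχR) _ _ x)

lemma exists_tsum_tail_add_lt (hh_abs : ∀ χ, Summable fun k => |h k χ|)
    (hh_unif : ∀ B : Set P, Bornology.IsBounded B → ∀ ε > (0:ℝ), ∃ N : ℕ, ∀ χ ∈ B, ∀ m ≥ N,
      ∑' k : ℕ, |h (k + m) χ| < ε)
    {B : Set P} (hB : Bornology.IsBounded B) {ψ : ℕ → P} {χ : P} (hψ : ∀ n, ψ n ∈ B)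
    (hχ : χ ∈ B) {ε : ℝ} (hε : 0 < ε) :
    ∃ N, ∀ n, ∑' k, (|h (k + N) (ψ n)| + |h (k + N) χ|) < ε := by
  obtain ⟨N, hN⟩ := hh_unif B hB (ε / 2) (half_pos hε)
  refine ⟨N, fun n => ?_⟩
  rw [Summable.tsum_add ((summable_nat_add_iff N).2 (hh_abs _))
    ((summable_nat_add_iff N).2 (hh_abs _))]
  linarith [hN _ (hψ n) N le_rfl, hN χ hχ N le_rfl]

lemma tendsto_eLpNorm_delaySeries_sub [MeasurableSpace X] {ν : Measure X} [IsFiniteMeasure ν]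
    {p : ℝ≥0∞} (hL : 0 ≤ L) (hA₀ : 0 ≤ A₀) (hI_sub : ∀ w w' x, |I w x - I w' x| ≤ L * ‖w - w'‖)
    (hI_le : ∀ w x, |I w x| ≤ A₀ + L * ‖w‖) (hu_le : ∀ k χ, ‖u k χ‖ ≤ ‖χ‖)
    (hu_cont : ∀ k, Continuous (u k)) (hh_cont : ∀ k, Continuous (h k))
    (hh_abs : ∀ χ, Summable fun k => |h k χ|)
    (hh_unif : ∀ B : Set P, Bornology.IsBounded B → ∀ ε > (0:ℝ), ∃ N : ℕ, ∀ χ ∈ B, ∀ m ≥ N,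
      ∑' k : ℕ, |h (k + m) χ| < ε)
    {χs : ℕ → P} {χ : P} (hχ : Tendsto χs atTop (𝓝 χ)) :
    Tendsto (fun n => eLpNorm (fun x => delaySeries I u h (χs n) x - delaySeries I u h χ x) p ν)
      atTop (𝓝 0) := by
  have hB := (Metric.isBounded_range_of_tendsto χs hχ).insert χ
  obtain ⟨R, hR⟩ := hB.exists_norm_le
  have hRn : ∀ n, ‖χs n‖ ≤ R := fun n => hR _ (mem_insert_of_mem _ (mem_range_self n))
  have hRχ : ‖χ‖ ≤ R := hR _ (mem_insert _ _)
  have hR0 : 0 ≤ R := (norm_nonneg _).trans hRχ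
  set e : ℕ → ℕ → ℝ := fun n k =>
    L * ‖u k (χs n) - u k χ‖ * |h k (χs n)| + (A₀ + L * R) * |h k (χs n) - h k χ| with he_def
  set q : ℕ → ℕ → ℝ := fun n k => |h k (χs n)| + |h k χ| with hq_def
  have he : ∀ n k, 0 ≤ e n k := fun n k => by positivity
  have heq : ∀ n k, e n k ≤ (L * (2 * R) + (A₀ + L * R)) * q n k := fun n k => by
    have hu : ‖u k (χs n) - u k χ‖ ≤ 2 * R := (norm_sub_le _ _).trans
      (by linarith [(hu_le k (χs n)).trans (hRn n), (hu_le k χ).trans hRχ])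
    calc e n k ≤ L * (2 * R) * q n k + (A₀ + L * R) * q n k := by
          simp only [he_def, hq_def]
          gcongr
          · exact le_add_of_nonneg_right (abs_nonneg _)
          · exact abs_sub _ _
      _ = _ := by ring
  have hq : ∀ n, Summable (q n) := fun n => (hh_abs _).add (hh_abs _)
  have hlim : ∀ k, Tendsto (fun n => e n k) atTop (𝓝 0) := fun k => by
    have hu := tendsto_iff_norm_sub_tendsto_zero.1 (((hu_cont k).tendsto χ).comp hχ)
    have hh := ((hh_cont k).tendsto χ).comp hχ
    simpa using ((tendsto_const_nhds.mul hu).mul hh.abs).add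
      (tendsto_const_nhds.mul (hh.sub_const (h k χ)).abs)
  have htail : ∀ ε > 0, ∃ N, ∀ n, ∑' k, q n (k + N) < ε := fun ε hε =>
    exists_tsum_tail_add_lt hh_abs hh_unif hB (fun n => mem_insert_of_mem _ (mem_range_self n))
      (mem_insert _ _) hε
  exact tendsto_eLpNorm_zero_of_norm_le
    (fun n => abs_delaySeries_sub_le hL hI_sub hI_le hu_le hh_abs hRχ
      (((hq n).mul_left _).of_nonneg_of_le (he n) (heq n)))
    (tendsto_tsum_of_dominated_uniform_tail (by positivity) he heq hq hlim htail)

end DelaySeries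

theorem stmt9
    {n₀ : ℕ} (Ω : Set (EuclideanSpace ℝ (Fin n₀)))
    (hΩbdd : Bornology.IsBounded Ω)
    (r : ℝ) (hr : 0 < r)
    (f : EuclideanSpace ℝ (Fin n₀) → ℝ) (hf : Measurable f)
    (Mf : ℝ) (hMf : ∀ z, |f z| ≤ Mf)
    (η : ℕ → C(Set.Icc (-r) (0:ℝ), Lp ℝ 2 (volume.restrict Ω)) → ℝ)
    (hηcont : ∀ k, Continuous (η k))
    (h : ℕ → C(Set.Icc (-r) (0:ℝ), Lp ℝ 2 (volume.restrict Ω)) → ℝ)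
    (hhcont : ∀ k, Continuous (h k))
    (hhabs : ∀ χ, Summable (fun k => |h k χ|))
    (hhunif : ∀ B : Set (C(Set.Icc (-r) (0:ℝ), Lp ℝ 2 (volume.restrict Ω))),
      Bornology.IsBounded B → ∀ ε > (0:ℝ), ∃ N : ℕ, ∀ χ ∈ B, ∀ m ≥ N,
        ∑' k : ℕ, |h (k + m) χ| < ε)
    (b : ℝ → ℝ) (Lb : ℝ)
    (hblip : ∀ s t : ℝ, |b s - b t| ≤ Lb * |s - t|) :
    (∀ φ : C(Set.Icc (-r) (0:ℝ), Lp ℝ 2 (volume.restrict Ω)),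
      MemLp (fun x => ∑' k : ℕ,
          (∫ y in Ω, b (φ (Set.projIcc (-r) 0 (by linarith) (-(η k φ))) y) * f (x - y)) *
            h k φ)
        2 (volume.restrict Ω)) ∧
    (∀ (φseq : ℕ → C(Set.Icc (-r) (0:ℝ), Lp ℝ 2 (volume.restrict Ω)))
       (φ : C(Set.Icc (-r) (0:ℝ), Lp ℝ 2 (volume.restrict Ω))),
      Tendsto (fun n => ‖φseq n - φ‖) atTop (nhds 0) →
      Tendsto (fun n => eLpNorm (fun x =>
          (∑' k : ℕ, (∫ y in Ω,
              b ((φseq n) (Set.projIcc (-r) 0 (by linarith) (-(η k (φseq n)))) y) *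
                f (x - y)) * h k (φseq n)) -
          (∑' k : ℕ, (∫ y in Ω,
              b (φ (Set.projIcc (-r) 0 (by linarith) (-(η k φ))) y) *
                f (x - y)) * h k φ))
          2 (volume.restrict Ω)) atTop (nhds 0)) := by
  have : IsFiniteMeasure (volume.restrict Ω) :=
    isFiniteMeasure_restrict.2 hΩbdd.measure_lt_top.ne
  have hb : LipschitzWith (Real.toNNReal Lb) b := LipschitzWith.of_dist_le' hblip
  have hMf0 : 0 ≤ Mf := (abs_nonneg _).trans (hMf 0)
  let u (k : ℕ) (φ : C(Icc (-r) (0:ℝ), Lp ℝ 2 (volume.restrict Ω))) : Lp ℝ 2 (volume.restrict Ω) :=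
    φ (projIcc (-r) 0 (by linarith) (-(η k φ)))
  have hu_le : ∀ k φ, ‖u k φ‖ ≤ ‖φ‖ := fun k φ => φ.norm_coe_le_norm _
  have hu_cont : ∀ k, Continuous (u k) := fun k =>
    continuous_id.eval (continuous_projIcc.comp (hηcont k).neg)
  have hI_meas : ∀ w : Lp ℝ 2 (volume.restrict Ω),
      AEStronglyMeasurable (nonlocalTerm (volume.restrict Ω) b f w) (volume.restrict Ω) :=
    fun w => (stronglyMeasurable_nonlocalTerm hb.continuous.measurable hf
      (Lp.stronglyMeasurable w).measurable).aestronglyMeasurable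
  have hI_sub := abs_nonlocalTerm_sub_le_norm (q := 2) (μ := volume.restrict Ω) hb hf hMf
  have hI_le := abs_nonlocalTerm_le_norm (q := 2) (μ := volume.restrict Ω) hb hf hMf
  exact ⟨memLp_delaySeries (by positivity) hI_meas hI_le hu_le hhabs,
    fun φseq φ hφ => tendsto_eLpNorm_delaySeries_sub (by positivity) (by positivity) hI_sub hI_le
      hu_le hu_cont hhcont hhabs hhunif (tendsto_iff_norm_sub_tendsto_zero.2 hφ)⟩
end

section
/- (Uniqueness in the general case of Theorem 2 on the ignoring interval.) Let X be a real Banach space, r > 0, T₀ > 0, C_X := C([−r,0]; X) with sup norm, and let (T(t))_{t≥0} be bounded linear operators on X with ‖T(t)‖ ≤ 1 and t ↦ T(t)x continuous for each x. Let F = F_c + F_d where F_c : C_X → X is Lipschitz with constant L and F_d : C_X → X is such that s ↦ F_d(u_s) is continuous for every u ∈ C([−r,T₀];X). Let δ > 0 and assume F_d has the property: for all v, w ∈ C([−r,T₀]; X) with v|_{[−r,0]} = w|_{[−r,0]}, one has F_d(v_t) = F_d(w_t) for every t ∈ [0, min(δ,T₀)). If u¹, u² ∈ C([−r,T₀]; X)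 are mild solutions with the same initial function φ, i.e. uⁱ|_{[−r,0]} = φ and uⁱ(t) = T(t)φ(0) + ∫₀ᵗ T(t−s) F(uⁱ_s) ds for t ∈ [0,T₀], then u¹(t) = u²(t) for all t ∈ [−r, min(δ,T₀)). -/
open MeasureTheory Set Filter Topology

/-- The history segment `u_s ∈ C([−r,0];X)` of a continuous function
`u ∈ C([−r,T₀];X)` at time `s`: `u_s(θ) = u(s+θ)` (the argument `s+θ` is clamped to
`[−r,T₀]`, which leaves it unchanged whenever `s ∈ [0,T₀]` and `θ ∈ [−r,0]`). -/
noncomputable def seg {X : Type*} [TopologicalSpace X] {r T₀ : ℝ} (h : -r ≤ T₀)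
    (u : C(Set.Icc (-r) T₀, X)) (s : ℝ) : C(Set.Icc (-r) (0:ℝ), X) :=
  ContinuousMap.mk (fun θ => u (Set.projIcc (-r) T₀ h (s + θ)))
    (by
      apply u.continuous.comp
      exact continuous_projIcc.comp (continuous_const.add continuous_subtype_val))

/-!
On `[0, min δ T₀)` the ignoring property cancels the `F_d` terms in the difference of the
two mild equations, so with contractive `T` and `L`-Lipschitz `F_c` the gap
`g(s) = ‖u¹_s − u²_s‖` satisfies `g(σ) ≤ L ∫₀^σ g` (the history before time `0` agrees).
By Gronwall's inequality `g` vanishes there.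
-/

theorem continuous_seg {X : Type*} [TopologicalSpace X] {r T₀ : ℝ} (h : -r ≤ T₀)
    (u : C(Icc (-r) T₀, X)) : Continuous (seg h u) :=
  let F : C(ℝ × Icc (-r) (0:ℝ), X) :=
    ⟨fun p => u (projIcc (-r) T₀ h (p.1 + p.2)), by fun_prop⟩
  F.curry.continuous

theorem apply_eq_of_seg_eq {X : Type*} [TopologicalSpace X] {r T₀ : ℝ} (h : -r ≤ T₀)
    {u₁ u₂ : C(Icc (-r) T₀, X)} {s t : ℝ}
    (hs : seg h u₁ s = seg h u₂ s) (ht : t ∈ Icc (s - r) s) :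
    u₁ (projIcc (-r) T₀ h t) = u₂ (projIcc (-r) T₀ h t) := by
  simpa [seg] using DFunLike.congr_fun hs ⟨t - s, by constructor <;> linarith [ht.1, ht.2]⟩

theorem norm_seg_sub_le {X : Type*} [NormedAddCommGroup X] {r T₀ : ℝ} (h : -r ≤ T₀)
    {u₁ u₂ : C(Icc (-r) T₀, X)} {s C : ℝ} (hC : 0 ≤ C)
    (hle : ∀ t ∈ Icc (s - r) s,
      ‖u₁ (projIcc (-r) T₀ h t) - u₂ (projIcc (-r) T₀ h t)‖ ≤ C) :
    ‖seg h u₁ s - seg h u₂ s‖ ≤ C :=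
  (ContinuousMap.norm_le _ hC).2 fun θ =>
    hle (s + θ) ⟨by linarith [θ.2.1], by linarith [θ.2.2]⟩

theorem ContinuousOn.clm_apply_of_norm_le {α 𝕜 E F : Type*} [TopologicalSpace α]
    [NontriviallyNormedField 𝕜] [NormedAddCommGroup E] [NormedSpace 𝕜 E]
    [NormedAddCommGroup F] [NormedSpace 𝕜 F] {T : α → E →L[𝕜] F} {x : α → E} {s : Set α}
    {C : ℝ} (hT : ∀ v, ContinuousOn (fun a => T a v) s) (hC : ∀ a ∈ s, ‖T a‖ ≤ C)
    (hx : ContinuousOn x s) : ContinuousOn (fun a => T a (x a)) s := by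
  intro a₀ ha₀
  have hx₀ : Tendsto (fun a => x a - x a₀) (𝓝[s] a₀) (𝓝 0) := by
    simpa using (hx a₀ ha₀).sub_const (x a₀)
  have hsmall : Tendsto (fun a => T a (x a - x a₀)) (𝓝[s] a₀) (𝓝 0) := by
    refine squeeze_zero_norm' ?_ (by simpa using hx₀.norm.const_mul C)
    filter_upwards [self_mem_nhdsWithin] with a ha
    exact (T a).le_of_opNorm_le (hC a ha) _
  simpa [ContinuousWithinAt] using (hT (x a₀) a₀ ha₀).tendsto.add hsmall

/-- Only the difference need be integrable: then `f` and `g` are integrable together, and if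
neither is, both integrals are the junk value `0`. -/
theorem norm_integral_sub_integral_le {E : Type*} [NormedAddCommGroup E] [NormedSpace ℝ E]
    {μ : Measure ℝ} {f g : ℝ → E} {a b : ℝ} (hab : a ≤ b)
    (hfg : IntervalIntegrable (fun x => f x - g x) μ a b) :
    ‖(∫ x in a..b, f x ∂μ) - ∫ x in a..b, g x ∂μ‖ ≤ ∫ x in a..b, ‖f x - g x‖ ∂μ := by
  by_cases hf : IntervalIntegrable f μ a b
  · have hg : IntervalIntegrable g μ a b := by simpa using hf.sub hfg
    rw [← intervalIntegral.integral_sub hf hg]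
    exact intervalIntegral.norm_integral_le_integral_norm hab
  · have hg : ¬IntervalIntegrable g μ a b := fun hg => hf (by simpa using hfg.add hg)
    rw [intervalIntegral.integral_undef hf, intervalIntegral.integral_undef hg, sub_zero,
      norm_zero]
    exact intervalIntegral.integral_nonneg_of_forall hab fun _ => norm_nonneg _

theorem eqOn_zero_of_le_mul_integral {g : ℝ → ℝ} {a b K : ℝ} (hg : Continuous g)
    (hg₀ : ∀ x ∈ Icc a b, 0 ≤ g x) (hle : ∀ x ∈ Icc a b, g x ≤ K * ∫ s in a..x, g s) :
    EqOn g 0 (Icc a b) := by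
  have hderiv : ∀ x, HasDerivAt (fun x => ∫ s in a..x, g s) (g x) x := fun x =>
    intervalIntegral.integral_hasDerivAt_right (hg.intervalIntegrable _ _)
      hg.aestronglyMeasurable.stronglyMeasurableAtFilter hg.continuousAt
  have hint₀ : ∀ x ∈ Icc a b, 0 ≤ ∫ s in a..x, g s := fun x hx =>
    intervalIntegral.integral_nonneg hx.1 fun s hs => hg₀ s ⟨hs.1, hs.2.trans hx.2⟩
  have hint : ∀ x ∈ Icc a b, ∫ s in a..x, g s = 0 :=
    eq_zero_of_abs_deriv_le_mul_abs_self_of_eq_zero_right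
      (fun x _ => (hderiv x).continuousAt.continuousWithinAt)
      (fun x _ => (hderiv x).hasDerivWithinAt) intervalIntegral.integral_same
      fun x hx => by
        rw [Real.norm_of_nonneg (hg₀ x (Ico_subset_Icc_self hx)),
          Real.norm_of_nonneg (hint₀ x (Ico_subset_Icc_self hx))]
        exact hle x (Ico_subset_Icc_self hx)
  intro x hx
  exact le_antisymm (by simpa [hint x hx] using hle x hx) (hg₀ x hx)

section MildSolution

variable {X : Type*} [NormedAddCommGroup X] [NormedSpace ℝ X] {T : ℝ → X →L[ℝ] X}

theorem norm_integral_semigroup_sub_le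
    (hTnorm : ∀ t : ℝ, 0 ≤ t → ‖T t‖ ≤ 1)
    (hTcont : ∀ x : X, ContinuousOn (fun t => T t x) (Ici 0))
    {f₁ f₂ : ℝ → X} {B : ℝ → ℝ} {σ : ℝ} (hσ : 0 ≤ σ)
    (hf : ContinuousOn (fun s => f₁ s - f₂ s) (Icc 0 σ)) (hB : ContinuousOn B (Icc 0 σ))
    (hfB : ∀ s ∈ Icc 0 σ, ‖f₁ s - f₂ s‖ ≤ B s) :
    ‖(∫ s in (0:ℝ)..σ, T (σ - s) (f₁ s)) - ∫ s in (0:ℝ)..σ, T (σ - s) (f₂ s)‖ ≤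
      ∫ s in (0:ℝ)..σ, B s := by
  have hTσ : ∀ v, ContinuousOn (fun s => T (σ - s) v) (Icc 0 σ) := fun v =>
    (hTcont v).comp (by fun_prop) fun s hs => sub_nonneg.2 hs.2
  have hcont : ContinuousOn (fun s => T (σ - s) (f₁ s - f₂ s)) (Icc 0 σ) :=
    ContinuousOn.clm_apply_of_norm_le hTσ (fun s hs => hTnorm _ (sub_nonneg.2 hs.2)) hf
  have hint := hcont.intervalIntegrable_of_Icc (μ := volume) hσ
  simp only [map_sub] at hint
  calc _ ≤ ∫ s in (0:ℝ)..σ, ‖T (σ - s) (f₁ s) - T (σ - s) (f₂ s)‖ :=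
        norm_integral_sub_integral_le hσ hint
    _ ≤ ∫ s in (0:ℝ)..σ, B s :=
        intervalIntegral.integral_mono_on hσ hint.norm (hB.intervalIntegrable_of_Icc hσ)
          fun s hs => by
            rw [← map_sub]
            exact ((T _).le_of_opNorm_le (hTnorm _ (sub_nonneg.2 hs.2)) _).trans
              (by simpa using hfB s hs)

variable {r T₀ : ℝ} (h : -r ≤ T₀) {Fc Fd : C(Icc (-r) (0:ℝ), X) → X} {K : NNReal}
  {u₁ u₂ : C(Icc (-r) T₀, X)} {x₀ : X}

theorem norm_sub_le_of_mild (hTnorm : ∀ t : ℝ, 0 ≤ t → ‖T t‖ ≤ 1)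
    (hTcont : ∀ x : X, ContinuousOn (fun t => T t x) (Ici 0)) (hK : LipschitzWith K Fc)
    {τ : ℝ} (hτ : 0 ≤ τ) (hFd : ∀ s ∈ Icc 0 τ, Fd (seg h u₁ s) = Fd (seg h u₂ s))
    (hmild₁ : u₁ (projIcc (-r) T₀ h τ) =
      T τ x₀ + ∫ s in (0:ℝ)..τ, T (τ - s) (Fc (seg h u₁ s) + Fd (seg h u₁ s)))
    (hmild₂ : u₂ (projIcc (-r) T₀ h τ) =
      T τ x₀ + ∫ s in (0:ℝ)..τ, T (τ - s) (Fc (seg h u₂ s) + Fd (seg h u₂ s))) :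
    ‖u₁ (projIcc (-r) T₀ h τ) - u₂ (projIcc (-r) T₀ h τ)‖ ≤
      K * ∫ s in (0:ℝ)..τ, ‖seg h u₁ s - seg h u₂ s‖ := by
  have hdiff : EqOn (fun s => Fc (seg h u₁ s) + Fd (seg h u₁ s) -
      (Fc (seg h u₂ s) + Fd (seg h u₂ s))) (fun s => Fc (seg h u₁ s) - Fc (seg h u₂ s))
      (Icc 0 τ) := fun s hs => by
    simp only [hFd s hs, add_sub_add_right_eq_sub]
  rw [hmild₁, hmild₂, add_sub_add_left_eq_sub, ← intervalIntegral.integral_const_mul]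
  have hseg := continuous_seg h u₁
  have hseg₂ := continuous_seg h u₂
  refine norm_integral_semigroup_sub_le hTnorm hTcont hτ ?_ (by fun_prop) fun s hs => ?_
  · exact ((hK.continuous.comp hseg).sub (hK.continuous.comp hseg₂)).continuousOn.congr hdiff
  · simp only [hFd s hs, add_sub_add_right_eq_sub]
    exact hK.norm_sub_le _ _

theorem norm_seg_sub_le_of_mild (hTnorm : ∀ t : ℝ, 0 ≤ t → ‖T t‖ ≤ 1)
    (hTcont : ∀ x : X, ContinuousOn (fun t => T t x) (Ici 0)) (hK : LipschitzWith K Fc)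
    {σ : ℝ} (hσ : 0 ≤ σ) (h₀ : seg h u₁ 0 = seg h u₂ 0)
    (hFd : ∀ s ∈ Icc 0 σ, Fd (seg h u₁ s) = Fd (seg h u₂ s))
    (hmild₁ : ∀ τ ∈ Icc 0 σ, u₁ (projIcc (-r) T₀ h τ) =
      T τ x₀ + ∫ s in (0:ℝ)..τ, T (τ - s) (Fc (seg h u₁ s) + Fd (seg h u₁ s)))
    (hmild₂ : ∀ τ ∈ Icc 0 σ, u₂ (projIcc (-r) T₀ h τ) =
      T τ x₀ + ∫ s in (0:ℝ)..τ, T (τ - s) (Fc (seg h u₂ s) + Fd (seg h u₂ s))) :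
    ‖seg h u₁ σ - seg h u₂ σ‖ ≤ K * ∫ s in (0:ℝ)..σ, ‖seg h u₁ s - seg h u₂ s‖ := by
  have hgap : Continuous fun s => ‖seg h u₁ s - seg h u₂ s‖ :=
    ((continuous_seg h u₁).sub (continuous_seg h u₂)).norm
  have hC : 0 ≤ K * ∫ s in (0:ℝ)..σ, ‖seg h u₁ s - seg h u₂ s‖ :=
    mul_nonneg K.2 (intervalIntegral.integral_nonneg_of_forall hσ fun _ => norm_nonneg _)
  refine norm_seg_sub_le h hC fun τ hτ => ?_
  rcases le_or_gt τ 0 with hτ0 | hτ0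
  · rw [apply_eq_of_seg_eq h h₀ ⟨by linarith [hτ.1], hτ0⟩, sub_self, norm_zero]
    exact hC
  have hτσ : τ ∈ Icc 0 σ := ⟨hτ0.le, hτ.2⟩
  calc _ ≤ K * ∫ s in (0:ℝ)..τ, ‖seg h u₁ s - seg h u₂ s‖ :=
        norm_sub_le_of_mild h hTnorm hTcont hK hτ0.le
          (fun s hs => hFd s ⟨hs.1, hs.2.trans hτ.2⟩) (hmild₁ τ hτσ) (hmild₂ τ hτσ)
    _ ≤ K * ∫ s in (0:ℝ)..σ, ‖seg h u₁ s - seg h u₂ s‖ := by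
        gcongr
        exact intervalIntegral.integral_mono_interval le_rfl hτ0.le hτ.2
          (ae_of_all _ fun _ => norm_nonneg _) (hgap.intervalIntegrable _ _)

end MildSolution

/-- uniqueness in the general case of Theorem 2 on the ignoring
interval: `X` a Banach space, `(T(t))_{t≥0}` strongly continuous linear contractions,
`F = F_c + F_d` with `F_c` Lipschitz (constant `L`) and `F_d` such that `s ↦ F_d(u_s)`
is continuous along every continuous `u`, and `F_d` has the ignoring property on
`[0, min(δ,T₀))`: solutions with the same initial history give the same value of
`F_d` there. Then two mild solutions with the same initial function `φ` coincide on
`[−r, min(δ,T₀))`. -/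
theorem stmt15
    {X : Type*} [NormedAddCommGroup X] [NormedSpace ℝ X]
    (r T₀ : ℝ) (hr : 0 < r) (hrT₀ : -r ≤ T₀)
    (T : ℝ → X →L[ℝ] X)
    (hTnorm : ∀ t : ℝ, 0 ≤ t → ‖T t‖ ≤ 1)
    (hTcont : ∀ x : X, ContinuousOn (fun t => T t x) (Set.Ici (0:ℝ)))
    (Fc Fd : C(Set.Icc (-r) (0:ℝ), X) → X)
    (L : ℝ) (hL : 0 ≤ L)
    (hFclip : ∀ p q : C(Set.Icc (-r) (0:ℝ), X), ‖Fc p - Fc q‖ ≤ L * ‖p - q‖)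
    (δ : ℝ)
    (hFdign : ∀ v w : C(Set.Icc (-r) T₀, X), seg hrT₀ v 0 = seg hrT₀ w 0 →
      ∀ t : ℝ, 0 ≤ t → t < min δ T₀ → Fd (seg hrT₀ v t) = Fd (seg hrT₀ w t))
    (u₁ u₂ : C(Set.Icc (-r) T₀, X))
    (φ : C(Set.Icc (-r) (0:ℝ), X))
    (hinit₁ : seg hrT₀ u₁ 0 = φ)
    (hinit₂ : seg hrT₀ u₂ 0 = φ)
    (hmild₁ : ∀ t ∈ Set.Icc (0:ℝ) T₀,
      u₁ (Set.projIcc (-r) T₀ hrT₀ t) =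
        T t (φ ⟨0, by constructor <;> linarith⟩) +
          ∫ s in (0:ℝ)..t, T (t - s) (Fc (seg hrT₀ u₁ s) + Fd (seg hrT₀ u₁ s)))
    (hmild₂ : ∀ t ∈ Set.Icc (0:ℝ) T₀,
      u₂ (Set.projIcc (-r) T₀ hrT₀ t) =
        T t (φ ⟨0, by constructor <;> linarith⟩) +
          ∫ s in (0:ℝ)..t, T (t - s) (Fc (seg hrT₀ u₂ s) + Fd (seg hrT₀ u₂ s))) :
    ∀ t ∈ Set.Ico (-r) (min δ T₀),
      u₁ (Set.projIcc (-r) T₀ hrT₀ t) = u₂ (Set.projIcc (-r) T₀ hrT₀ t) := by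
  rintro t ⟨htr, ht⟩
  have h₀ : seg hrT₀ u₁ 0 = seg hrT₀ u₂ 0 := hinit₁.trans hinit₂.symm
  rcases le_or_gt t 0 with ht0 | ht0
  · exact apply_eq_of_seg_eq hrT₀ h₀ ⟨by linarith, ht0⟩
  have hK : LipschitzWith ⟨L, hL⟩ Fc :=
    LipschitzWith.of_dist_le_mul fun p q => by rw [dist_eq_norm, dist_eq_norm]; exact hFclip p q
  have hT₀ : t < T₀ := ht.trans_le (min_le_right _ _)
  have hgap : EqOn (fun s => ‖seg hrT₀ u₁ s - seg hrT₀ u₂ s‖) 0 (Icc 0 t) :=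
    eqOn_zero_of_le_mul_integral ((continuous_seg hrT₀ u₁).sub (continuous_seg hrT₀ u₂)).norm
      (fun _ _ => norm_nonneg _) fun σ hσ =>
        norm_seg_sub_le_of_mild hrT₀ hTnorm hTcont hK hσ.1 h₀
          (fun s hs => hFdign u₁ u₂ h₀ s hs.1 (hs.2.trans_lt (hσ.2.trans_lt ht)))
          (fun τ hτ => hmild₁ τ ⟨hτ.1, by linarith [hτ.2, hσ.2]⟩)
          (fun τ hτ => hmild₂ τ ⟨hτ.1, by linarith [hτ.2, hσ.2]⟩)
  have hseg : seg hrT₀ u₁ t = seg hrT₀ u₂ t :=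
    sub_eq_zero.1 (norm_eq_zero.1 (hgap ⟨ht0.le, le_rfl⟩))
  exact apply_eq_of_seg_eq hrT₀ hseg ⟨by linarith, le_rfl⟩
end
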